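/- arXiv:1703.03342 — 10 statements merged into one kernel-verified Lean document; each statement's English description precedes it below -/
import Mathlib

section
/- For every sufficiently large natural number n, setting k = ⌈3·log₂ n⌉, there exists an n×n Boolean matrix that contains no monochromatic k×k minor. -/
/-!
Erdős's counting argument. A fixed `k × k` minor is constant with a given value in a `2^{-k²}`
fraction of all Boolean matrices, and there are at most `n^k · n^k` ways to choose its rows and
columns, so some matrix has no monochromatic `k × k` minor as soon as `2 · n^{2k} < 2^{k²}`.
For `k ≥ 3 log₂ n` we have `n³ ≤ 2^k`, and cubing reduces that inequality to `3 + 2k² < 3k²`.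
-/

open Finset

section PropertyB

variable {X : Type*} [Fintype X]

theorem card_filter_forall_mem_eq_mul_two_pow [DecidableEq X] (S : Finset X) (b : Bool) :
    #{f : X → Bool | ∀ x ∈ S, f x = b} * 2 ^ #S = 2 ^ Fintype.card X := by
  have hpi : ({f : X → Bool | ∀ x ∈ S, f x = b} : Finset _) =
      Fintype.piFinset fun x => if x ∈ S then {b} else univ := by
    ext f
    simp only [mem_filter, mem_univ, true_and, Fintype.mem_piFinset]
    refine ⟨fun h x => ?_, fun h x hx => by simpa [hx] using h x⟩
    split_ifs with hx
    · simp [h x hx]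
    · exact mem_univ _
  rw [hpi, Fintype.card_piFinset, ← card_compl_add_card S, pow_add]
  congr 1
  simp only [apply_ite card, card_singleton, card_univ, Fintype.card_bool]
  rw [prod_ite, prod_const_one, one_mul, prod_const, filter_notMem_eq_sdiff, compl_eq_univ_sdiff]

theorem exists_coloring_forall_exists_mem_ne {ι : Type*} [Fintype ι] (S : ι → Finset X) {m : ℕ}
    (hS : ∀ i, m ≤ #(S i)) (h : 2 * Fintype.card ι < 2 ^ m) :
    ∃ f : X → Bool, ∀ i b, ∃ x ∈ S i, f x ≠ b := by
  classical
  set bad : ι × Bool → Finset (X → Bool) := fun t => {f | ∀ x ∈ S t.1, f x = t.2}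
  have hbad : ∀ t, #(bad t) * 2 ^ m ≤ 2 ^ Fintype.card X := fun t =>
    calc #(bad t) * 2 ^ m ≤ #(bad t) * 2 ^ #(S t.1) := by gcongr; exacts [one_le_two, hS t.1]
      _ = 2 ^ Fintype.card X := card_filter_forall_mem_eq_mul_two_pow (S t.1) t.2
  have hunion : #(univ.biUnion bad) < Fintype.card (X → Bool) := by
    refine lt_of_mul_lt_mul_right (a := 2 ^ m) ?_ (Nat.zero_le _)
    calc #(univ.biUnion bad) * 2 ^ m ≤ (∑ t, #(bad t)) * 2 ^ m :=
          Nat.mul_le_mul_right _ card_biUnion_le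
      _ ≤ ∑ _t : ι × Bool, 2 ^ Fintype.card X := by rw [sum_mul]; exact sum_le_sum fun t _ => hbad t
      _ = 2 * Fintype.card ι * 2 ^ Fintype.card X := by simp [mul_comm]
      _ < 2 ^ m * 2 ^ Fintype.card X := Nat.mul_lt_mul_of_pos_right h (by positivity)
      _ = Fintype.card (X → Bool) * 2 ^ m := by simp [mul_comm]
  obtain ⟨f, -, hf⟩ := exists_mem_notMem_of_card_lt_card hunion
  refine ⟨f, fun i b => ?_⟩
  by_contra! hconst
  exact hf (mem_biUnion.2 ⟨(i, b), mem_univ _, by simpa [bad] using hconst⟩)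

end PropertyB

theorem exists_matrix_not_exists_monochromatic_minor {α β : Type*} [Fintype α] [Fintype β] {k : ℕ}
    (h : 2 * Fintype.card α ^ k * Fintype.card β ^ k < 2 ^ (k * k)) :
    ∃ M : α → β → Bool, ¬ ∃ (r : Fin k → α) (c : Fin k → β),
      Function.Injective r ∧ Function.Injective c ∧ ∃ b : Bool, ∀ i j, M (r i) (c j) = b := by
  classical
  let minor : (Fin k ↪ α) × (Fin k ↪ β) → Finset (α × β) := fun rc => univ.map (rc.1.prodMap rc.2)
  have hminor : ∀ rc, k * k ≤ #(minor rc) := fun rc => by simp [minor]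
  have hcard : 2 * Fintype.card ((Fin k ↪ α) × (Fin k ↪ β)) < 2 ^ (k * k) := by
    refine h.trans_le' ?_
    simp only [Fintype.card_prod, Fintype.card_embedding_eq, Fintype.card_fin, mul_assoc]
    gcongr <;> exact Nat.descFactorial_le_pow _ _
  obtain ⟨f, hf⟩ := exists_coloring_forall_exists_mem_ne minor hminor hcard
  refine ⟨Function.curry f, fun ⟨r, c, hr, hc, b, hb⟩ => ?_⟩
  obtain ⟨x, hx, hne⟩ := hf (⟨r, hr⟩, ⟨c, hc⟩) b
  obtain ⟨⟨i, j⟩, -, rfl⟩ := mem_map.1 hx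
  exact hne (hb i j)

theorem two_mul_pow_mul_pow_lt_two_pow_mul_self {n k : ℕ} (hn : 2 ≤ n) (h : n ^ 3 ≤ 2 ^ k) :
    2 * n ^ k * n ^ k < 2 ^ (k * k) := by
  have hk : 3 ≤ k := by
    have : 2 ^ 3 ≤ 2 ^ k := (Nat.pow_le_pow_left hn 3).trans h
    exact (Nat.pow_le_pow_iff_right one_lt_two).1 this
  refine lt_of_pow_lt_pow_left₀ 3 (Nat.zero_le _) ?_
  calc (2 * n ^ k * n ^ k) ^ 3 = 2 ^ 3 * (n ^ 3) ^ (2 * k) := by ring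
    _ ≤ 2 ^ 3 * (2 ^ k) ^ (2 * k) := by gcongr
    _ = 2 ^ (3 + 2 * (k * k)) := by ring
    _ < 2 ^ (3 * (k * k)) := Nat.pow_lt_pow_right one_lt_two (by nlinarith)
    _ = (2 ^ (k * k)) ^ 3 := by ring

theorem pow_three_le_two_pow_ceil_three_mul_logb (n : ℕ) :
    n ^ 3 ≤ 2 ^ ⌈3 * Real.logb 2 n⌉₊ := by
  rcases n.eq_zero_or_pos with rfl | hn
  · simp
  have : (n : ℝ) ^ 3 ≤ 2 ^ ⌈3 * Real.logb 2 n⌉₊ :=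
    calc (n : ℝ) ^ 3 = (2 : ℝ) ^ (3 * Real.logb 2 n) := by
          rw [mul_comm, Real.rpow_mul zero_le_two, Real.rpow_logb two_pos (by norm_num)
            (by exact_mod_cast hn)]
          norm_cast
      _ ≤ (2 : ℝ) ^ (⌈3 * Real.logb 2 n⌉₊ : ℝ) :=
          Real.rpow_le_rpow_of_exponent_le one_le_two (Nat.le_ceil _)
      _ = 2 ^ ⌈3 * Real.logb 2 n⌉₊ := Real.rpow_natCast _ _
  exact_mod_cast this

/-- For every sufficiently large `n`, with `k = ⌈3 · log₂ n⌉`, there exists an `n × n`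
Boolean matrix with no monochromatic `k × k` minor. -/
theorem exists_matrix_no_monochromatic_minor :
    ∃ N : ℕ, ∀ n : ℕ, N ≤ n →
      ∃ M : Fin n → Fin n → Bool,
        ¬ ∃ (r c : Fin (⌈3 * Real.logb 2 n⌉₊) → Fin n),
            Function.Injective r ∧ Function.Injective c ∧
            ∃ b : Bool, ∀ i j, M (r i) (c j) = b := by
  refine ⟨2, fun n hn => exists_matrix_not_exists_monochromatic_minor ?_⟩
  simpa only [Fintype.card_fin] using
    two_mul_pow_mul_pow_lt_two_pow_mul_self hn (pow_three_le_two_pow_ceil_three_mul_logb n)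
end

section
/- There exists ε > 0 such that for every sufficiently large natural number n there exists x : Fin n → Bool such that for every k with 1 ≤ k ≤ n − 1, the Hamming distance between x and its cyclic shift by k is at least ε·n. -/
/-!
If `x` lies within Hamming distance `m` of its shift `x ∘ (· + c)`, then `x` is determined by its
first `c` bits together with the set `{i | x i ≠ x (i + c)}`, which has fewer than `m` elements:
walking along `i, i + c, i + 2c, …` rebuilds `x` from its first `c` bits. Since shifting by `-c`
gives the same distance we may take `c ≤ n / 2`, so at most `n · 2 ^ (n / 2) · #{s | #s < m}`
strings are close to some nontrivial shift. For `m ≈ n / 16` there are at most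
`16 ^ m (17 / 16) ^ n` such small sets `s` (weigh each `s` by `16 ^ (-#s)`), and the whole
count is `o(2 ^ n)`.
-/

open Finset Filter

theorem hammingDist_comp_add_neg {G β : Type*} [AddGroup G] [Fintype G] [DecidableEq β]
    (x : G → β) (c : G) :
    hammingDist x (x ∘ (· + -c)) = hammingDist x (x ∘ (· + c)) :=
  card_equiv (Equiv.addRight (-c)) fun i => by simp [ne_comm]

section Shift

variable {n : ℕ} [NeZero n]

theorem eq_of_forall_lt_eq_of_forall_eq_add_iff {c : Fin n} (hc : c ≠ 0) {x y : Fin n → Bool}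
    (hlt : ∀ i < c, x i = y i) (hstep : ∀ i, (x i = x (i + c) ↔ y i = y (i + c))) :
    x = y := by
  funext i
  induction i using WellFoundedLT.induction with
  | _ i ih =>
  rcases lt_or_ge i c with hic | hci
  · exact hlt i hic
  · have hpred : i - c < i := by
      rw [Fin.lt_def, Fin.sub_val_of_le hci]
      have hc₀ := Fin.pos_iff_ne_zero.2 hc
      omega
    have hstep' := hstep (i - c)
    rw [sub_add_cancel, ih _ hpred] at hstep'
    revert hstep'
    cases x i <;> cases y i <;> cases y (i - c) <;> simp

theorem card_hammingDist_comp_add_lt_le {c : Fin n} (hc : c ≠ 0) (m : ℕ) :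
    #{x : Fin n → Bool | hammingDist x (x ∘ (· + c)) < m}
      ≤ 2 ^ (c : ℕ) * #{s : Finset (Fin n) | #s < m} := by
  let encode (x : Fin n → Bool) : (Fin c → Bool) × Finset (Fin n) :=
    (fun j => x (Fin.castLE c.is_le' j), ({i | x i ≠ x (i + c)} : Finset (Fin n)))
  calc _ ≤ #((univ : Finset (Fin c → Bool)) ×ˢ ({s | #s < m} : Finset (Finset (Fin n)))) := by
        refine card_le_card_of_injOn encode (fun x hx => ?_) fun x _ y _ hxy => ?_
        · simpa [encode, hammingDist] using hx
        · simp only [encode, Prod.mk.injEq, funext_iff, Finset.ext_iff, mem_filter_univ] at hxy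
          refine eq_of_forall_lt_eq_of_forall_eq_add_iff hc (fun i hi => hxy.1 ⟨i, hi⟩)
            fun i => ?_
          simpa [not_iff_not] using hxy.2 i
    _ = _ := by simp [card_product]

theorem card_hammingDist_comp_add_lt_le_two_pow_half {c : Fin n} (hc : c ≠ 0) (m : ℕ) :
    #{x : Fin n → Bool | hammingDist x (x ∘ (· + c)) < m}
      ≤ 2 ^ (n / 2) * #{s : Finset (Fin n) | #s < m} := by
  rcases le_or_gt (c : ℕ) (n / 2) with hc_small | hc_large
  · exact (card_hammingDist_comp_add_lt_le hc m).trans (by gcongr; exact one_le_two)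
  · have hneg : ((-c : Fin n) : ℕ) ≤ n / 2 := by rw [Fin.val_neg, if_neg hc]; omega
    simp_rw [← hammingDist_comp_add_neg _ c]
    exact (card_hammingDist_comp_add_lt_le (neg_ne_zero.2 hc) m).trans
      (by gcongr; exact one_le_two)

theorem exists_forall_le_hammingDist_comp_add {m : ℕ}
    (h : n * (2 ^ (n / 2) * #{s : Finset (Fin n) | #s < m}) < 2 ^ n) :
    ∃ x : Fin n → Bool, ∀ c ≠ 0, m ≤ hammingDist x (x ∘ (· + c)) := by
  set L := #{s : Finset (Fin n) | #s < m}
  let bad : Finset (Fin n → Bool) :=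
    ({c | c ≠ 0} : Finset (Fin n)).biUnion fun c => {x | hammingDist x (x ∘ (· + c)) < m}
  have hbad : #bad < #(univ : Finset (Fin n → Bool)) := by
    calc #bad ≤ ∑ c : Fin n with c ≠ 0, 2 ^ (n / 2) * L :=
          card_biUnion_le.trans (sum_le_sum fun c hc =>
            card_hammingDist_comp_add_lt_le_two_pow_half (mem_filter.1 hc).2 m)
      _ ≤ n * (2 ^ (n / 2) * L) := by
          rw [sum_const, smul_eq_mul]
          gcongr
          exact (card_filter_le _ _).trans_eq (card_fin n)
      _ < _ := by rwa [card_univ, Fintype.card_fun, Fintype.card_bool, Fintype.card_fin]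
  obtain ⟨x, -, hx⟩ := exists_mem_notMem_of_card_lt_card hbad
  simp only [bad, mem_biUnion, mem_filter_univ, not_exists, not_and, not_lt] at hx
  exact ⟨x, hx⟩

end Shift

theorem card_filter_card_lt_le {α : Type*} [Fintype α] {t : ℝ} (ht₀ : 0 < t) (ht₁ : t ≤ 1)
    (m : ℕ) :
    (#{s : Finset α | #s < m} : ℝ) ≤ (1 + t) ^ Fintype.card α / t ^ m := by
  rw [le_div_iff₀ (by positivity), add_comm, ← Fintype.sum_pow_mul_eq_add_pow, mul_comm]
  calc t ^ m * (#{s : Finset α | #s < m} : ℝ) = ∑ s : Finset α with #s < m, t ^ m := by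
        simp [mul_comm]
    _ ≤ ∑ s : Finset α with #s < m, t ^ #s * 1 ^ (Fintype.card α - #s) :=
        sum_le_sum fun s hs => by
          simpa using pow_le_pow_of_le_one ht₀.le ht₁ (mem_filter.1 hs).2.le
    _ ≤ _ := sum_le_sum_of_subset_of_nonneg (filter_subset _ _) fun _ _ _ => by positivity

theorem eventually_mul_two_pow_half_mul_lt_two_pow :
    ∀ᶠ n : ℕ in atTop,
      (n : ℝ) * (2 ^ (n / 2) * ((1 + 1 / 16) ^ n / (1 / 16) ^ (n / 16 + 1))) < 2 ^ n := by
  -- With `b = 2 ^ (1 / 4)`, the floors `n / 2` and `n / 16` are absorbed by `2 = b ^ 4` and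
  -- `16 = b ^ 16`.
  set b : ℝ := √√2
  have hb2 : b ^ 2 = √2 := Real.sq_sqrt (Real.sqrt_nonneg 2)
  have hb4 : b ^ 4 = 2 := by rw [show 4 = 2 * 2 by rfl, pow_mul, hb2, Real.sq_sqrt zero_le_two]
  have hb22 : (b ^ 2) ^ 2 = 2 := by rw [← pow_mul, hb4]
  have hb16 : b ^ 16 = 16 := by rw [show 16 = 4 * 4 by rfl, pow_mul, hb4]; norm_num
  have hb1 : 1 ≤ b := Real.one_le_sqrt.2 (Real.one_le_sqrt.2 one_le_two)
  have hfloor {a : ℝ} (ha : 1 ≤ a) (d n : ℕ) : (a ^ d) ^ (n / d) ≤ a ^ n := by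
    rw [← pow_mul]; exact pow_le_pow_right₀ ha (Nat.mul_div_le n d)
  have hr : 17 / (16 * b) < 1 := by
    rw [div_lt_one (by positivity)]
    exact lt_of_pow_lt_pow_left₀ 4 (by positivity) (by rw [mul_pow, hb4]; norm_num)
  filter_upwards [(tendsto_self_mul_const_pow_of_lt_one (by positivity) hr).eventually
    (gt_mem_nhds (show (0 : ℝ) < 1 / 16 by norm_num))] with n hn
  calc (n : ℝ) * (2 ^ (n / 2) * ((1 + 1 / 16) ^ n / (1 / 16) ^ (n / 16 + 1)))
      = 16 * n * ((17 / 16) ^ n * ((b ^ 2) ^ 2) ^ (n / 2) * (b ^ 16) ^ (n / 16)) := by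
        rw [hb22, hb16, pow_succ, one_div_pow]
        field_simp
        norm_num
    _ ≤ 16 * n * ((17 / 16) ^ n * (b ^ 2) ^ n * b ^ n) := by
        gcongr
        · exact hfloor (one_le_pow₀ hb1) 2 n
        · exact hfloor hb1 16 n
    _ = 16 * (n * (17 / (16 * b)) ^ n) * (b ^ 4) ^ n := by
        have hbase : 17 / 16 * b ^ 2 * b = 17 / (16 * b) * b ^ 4 := by
          field_simp
        rw [← mul_pow, ← mul_pow, hbase, mul_pow]
        ring
    _ < 1 * 2 ^ n := by
        rw [hb4]
        gcongr
        linarith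
    _ = 2 ^ n := one_mul _

/-- There exists `ε > 0` such that for every sufficiently large `n` there is a bit
string `x : Fin n → Bool` whose Hamming distance to each of its nontrivial cyclic
shifts (by `k` positions, `1 ≤ k ≤ n − 1`) is at least `ε·n`. -/
theorem exists_cyclically_asymmetric_string :
    ∃ ε : ℝ, 0 < ε ∧ ∃ N : ℕ, ∀ n : ℕ, N ≤ n →
      ∃ x : Fin n → Bool, ∀ k : ℕ, 1 ≤ k → k ≤ n - 1 →
        ε * n ≤
          (hammingDist x (fun i => x ⟨((i : ℕ) + k) % n, Nat.mod_lt _ i.pos⟩) : ℝ) := by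
  obtain ⟨N, hN⟩ := eventually_atTop.1
    (eventually_mul_two_pow_half_mul_lt_two_pow.and (eventually_gt_atTop 0))
  refine ⟨1 / 16, by norm_num, N, fun n hn => ?_⟩
  obtain ⟨hcount, hn₀⟩ := hN n hn
  have : NeZero n := ⟨hn₀.ne'⟩
  obtain ⟨x, hx⟩ := exists_forall_le_hammingDist_comp_add (m := n / 16 + 1) <| by
    have hlight := card_filter_card_lt_le (α := Fin n) (t := 1 / 16) (by norm_num) (by norm_num)
      (n / 16 + 1)
    rw [Fintype.card_fin] at hlight
    have hcount' : (n : ℝ) * (2 ^ (n / 2) * #{s : Finset (Fin n) | #s < n / 16 + 1}) < 2 ^ n :=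
      lt_of_le_of_lt (by gcongr) hcount
    exact_mod_cast hcount'
  refine ⟨x, fun k hk₁ hk₂ => ?_⟩
  have hk : Fin.ofNat n k ≠ 0 := by
    rw [Ne, Fin.ext_iff, Fin.val_ofNat, Fin.val_zero, Nat.mod_eq_of_lt (by omega)]
    omega
  have hshift : (fun i : Fin n => x ⟨((i : ℕ) + k) % n, Nat.mod_lt _ i.pos⟩)
      = x ∘ (· + Fin.ofNat n k) := by
    funext i
    congr 1
    ext
    rw [Fin.val_add, Fin.val_ofNat, Nat.add_mod_mod]
  rw [hshift]
  calc 1 / 16 * (n : ℝ) ≤ (n / 16 + 1 : ℕ) := by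
        rw [one_div_mul_eq_div, div_le_iff₀ (by norm_num)]
        exact_mod_cast (by omega : n ≤ (n / 16 + 1) * 16)
    _ ≤ _ := by exact_mod_cast hx _ hk
end

section
/- For every real ε with 0 < ε ≤ 1/4 and all natural numbers n, k with 1 ≤ k ≤ n/2, the number of strings x : Fin n → Bool whose Hamming distance to their cyclic shift by k is strictly less than ε·n is at most 2^k · 2^(H₂(2ε)·(n − k)). -/
/-!
A string `x` is determined by its first `k` bits together with the set `D` of positions
`j < n - k` at which `x j ≠ x (j + k)`, since then `x (j + k) = x j xor [j ∈ D]`. Every such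
position is one where `x` and its cyclic shift by `k` differ, so `#D < ε n ≤ 2ε (n - k)` when
`2k ≤ n`. Finally, an `m`-set has at most `2 ^ (H₂(p) m)` subsets of size at most `p m` when
`p ≤ 1/2`: each of them has weight `p ^ #t (1 - p) ^ (m - #t) ≥ 2 ^ (-H₂(p) m)` in the binomial
expansion of `(p + (1 - p)) ^ m = 1`.
-/

/-- The binary entropy function `H₂(p) = p·log₂(1/p) + (1−p)·log₂(1/(1−p))`. -/
noncomputable def binEntropy (p : ℝ) : ℝ :=
  p * Real.logb 2 (1 / p) + (1 - p) * Real.logb 2 (1 / (1 - p))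

open Finset

theorem two_rpow_neg_binEntropy_mul_le {p : ℝ} (hp : 0 < p) (hp2 : p ≤ 1 / 2) {m j : ℕ}
    (hj : (j : ℝ) ≤ p * m) :
    (2 : ℝ) ^ (-(binEntropy p * m)) ≤ p ^ j * (1 - p) ^ (m - j) := by
  set q := 1 - p
  have hq : 0 < q := by linarith
  have hpq : 0 < p / q := div_pos hp hq
  have hjm : j ≤ m := by
    have : (j : ℝ) ≤ m := hj.trans (by nlinarith [(m.cast_nonneg : (0 : ℝ) ≤ m)])
    exact_mod_cast this
  have hsplit : p ^ j * q ^ (m - j) = q ^ (m : ℝ) * (p / q) ^ (j : ℝ) := by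
    rw [Real.rpow_natCast, Real.rpow_natCast, div_pow, ← Nat.sub_add_cancel hjm, pow_add]
    field_simp
    rw [Nat.add_sub_cancel]
  -- `q ^ m * (p / q) ^ t` is antitone in `t` and equals `2 ^ (-H₂(p) m)` at `t = p m`.
  calc (2 : ℝ) ^ (-(binEntropy p * m))
      = 2 ^ (Real.logb 2 q * m + Real.logb 2 (p / q) * (p * m)) := by
        rw [Real.logb_div hp.ne' hq.ne']
        simp only [binEntropy, one_div, Real.logb_inv, q]
        ring_nf
    _ = q ^ (m : ℝ) * (p / q) ^ (p * m) := by
        rw [Real.rpow_add two_pos, Real.rpow_mul two_pos.le, Real.rpow_mul two_pos.le,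
          Real.rpow_logb two_pos (by norm_num) hq, Real.rpow_logb two_pos (by norm_num) hpq]
    _ ≤ q ^ (m : ℝ) * (p / q) ^ (j : ℝ) := by
        refine mul_le_mul_of_nonneg_left ?_ (by positivity)
        exact Real.rpow_le_rpow_of_exponent_ge hpq (by rw [div_le_one hq]; linarith) hj
    _ = p ^ j * q ^ (m - j) := hsplit.symm

theorem card_filter_card_le_mul_le_two_rpow_binEntropy {α : Type*} [Fintype α] {p : ℝ}
    (hp : 0 < p) (hp2 : p ≤ 1 / 2) :
    (#{t : Finset α | (#t : ℝ) ≤ p * Fintype.card α} : ℝ) ≤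
      2 ^ (binEntropy p * Fintype.card α) := by
  set m := Fintype.card α
  set S : Finset (Finset α) := {t | (#t : ℝ) ≤ p * m}
  have hS : #S * (2 : ℝ) ^ (-(binEntropy p * m)) ≤ 1 :=
    calc #S * (2 : ℝ) ^ (-(binEntropy p * m))
        ≤ ∑ t ∈ S, p ^ #t * (1 - p) ^ (m - #t) := by
          rw [← nsmul_eq_mul]
          exact card_nsmul_le_sum _ _ _ fun t ht ↦
            two_rpow_neg_binEntropy_mul_le hp hp2 (mem_filter.mp ht).2
      _ ≤ ∑ t : Finset α, p ^ #t * (1 - p) ^ (m - #t) :=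
          sum_le_sum_of_subset_of_nonneg (subset_univ S) fun _ _ _ ↦ by
            have : p < 1 := by linarith
            positivity
      _ = 1 := by rw [Fintype.sum_pow_mul_eq_add_pow, add_sub_cancel, one_pow]
  rwa [Real.rpow_neg (by norm_num), mul_inv_le_iff₀ (by positivity), one_mul] at hS

def cyclicShift {α : Type*} {n : ℕ} (x : Fin n → α) (k : ℕ) : Fin n → α :=
  fun i => x ⟨(i + k) % n, Nat.mod_lt _ i.pos⟩

section ShiftDiff

variable {α : Type*} [DecidableEq α] {n : ℕ}

def shiftDiffSet (x : Fin n → α) (k : ℕ) : Finset (Fin (n - k)) :=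
  {j | x ⟨j, by omega⟩ ≠ x ⟨j + k, by omega⟩}

theorem card_shiftDiffSet_le_hammingDist (x : Fin n → α) (k : ℕ) :
    #(shiftDiffSet x k) ≤ hammingDist x (cyclicShift x k) := by
  refine card_le_card_of_injOn (fun j ↦ ⟨j, by omega⟩) (fun j hj ↦ ?_)
    fun _ _ _ _ h ↦ Fin.ext (Fin.mk.inj_iff.mp h)
  have hjk : ((j : ℕ) + k) % n = j + k := Nat.mod_eq_of_lt (by omega)
  simp only [shiftDiffSet, mem_coe, mem_filter, mem_univ, true_and] at hj ⊢
  simpa only [cyclicShift, hjk] using hj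

theorem apply_add_eq_xor_mem_shiftDiffSet (x : Fin n → Bool) (k : ℕ) (j : Fin (n - k)) :
    x ⟨j + k, by omega⟩ = (x ⟨j, by omega⟩ ^^ decide (j ∈ shiftDiffSet x k)) := by
  simp only [shiftDiffSet, mem_filter, mem_univ, true_and]
  cases x ⟨j, by omega⟩ <;> cases x ⟨j + k, by omega⟩ <;> simp

theorem injective_prefix_prod_shiftDiffSet {k : ℕ} (hk : 1 ≤ k) (hkn : k ≤ n) :
    Function.Injective fun x : Fin n → Bool ↦
      (fun j : Fin k ↦ x (Fin.castLE hkn j), shiftDiffSet x k) := by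
  intro x y hxy
  obtain ⟨hpre, hdiff⟩ := Prod.mk.inj hxy
  funext ⟨i, hi⟩
  induction i using Nat.strong_induction_on with
  | _ i ih =>
    rcases lt_or_ge i k with hik | hik
    · exact congrFun hpre ⟨i, hik⟩
    · obtain ⟨j, rfl⟩ : ∃ j, i = j + k := ⟨i - k, by omega⟩
      have hx := apply_add_eq_xor_mem_shiftDiffSet x k ⟨j, by omega⟩
      have hy := apply_add_eq_xor_mem_shiftDiffSet y k ⟨j, by omega⟩
      rw [hx, hy, hdiff, ih j (by omega)]

theorem card_filter_shiftDiffSet_le {k : ℕ} (hk : 1 ≤ k) (hkn : k ≤ n)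
    (P : Finset (Fin (n - k)) → Prop) [DecidablePred P] :
    #{x : Fin n → Bool | P (shiftDiffSet x k)} ≤ 2 ^ k * #{t | P t} := by
  calc #{x : Fin n → Bool | P (shiftDiffSet x k)}
      ≤ #((univ : Finset (Fin k → Bool)) ×ˢ ({t | P t} : Finset _)) :=
        card_le_card_of_injOn _ (fun x hx ↦ by simpa using hx)
          (injective_prefix_prod_shiftDiffSet hk hkn).injOn
    _ = 2 ^ k * #{t | P t} := by simp [card_product]

end ShiftDiff

/-- For `0 < ε ≤ 1/4` and `1 ≤ k ≤ n/2`, the number of strings `x : Fin n → Bool`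
whose Hamming distance to their cyclic shift by `k` is less than `ε·n` is at most
`2^k · 2^(H₂(2ε)·(n−k))`. -/
theorem card_strings_close_to_shift_le (ε : ℝ) (hε : 0 < ε) (hε' : ε ≤ 1 / 4)
    (n k : ℕ) (hk : 1 ≤ k) (hkn : k ≤ n / 2) :
    (Nat.card {x : Fin n → Bool //
        (hammingDist x (fun i => x ⟨((i : ℕ) + k) % n, Nat.mod_lt _ i.pos⟩) : ℝ) < ε * n} : ℝ)
      ≤ 2 ^ k * 2 ^ (binEntropy (2 * ε) * ((n : ℝ) - k)) := by
  have hm : ((n - k : ℕ) : ℝ) = n - k := Nat.cast_sub (by omega)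
  have hεn : ε * n ≤ 2 * ε * (n - k : ℕ) := by
    have : (2 * k : ℝ) ≤ n := by exact_mod_cast (by omega : 2 * k ≤ n)
    rw [hm]; nlinarith
  have hsub :
      ({x | (hammingDist x (cyclicShift x k) : ℝ) < ε * n} : Finset (Fin n → Bool)) ⊆
      ({x | (#(shiftDiffSet x k) : ℝ) ≤ 2 * ε * (n - k : ℕ)} : Finset _) := fun x hx ↦ by
    simp only [mem_filter, mem_univ, true_and] at hx ⊢
    exact (Nat.cast_le.mpr (card_shiftDiffSet_le_hammingDist x k)).trans (hx.le.trans hεn)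
  rw [Nat.card_eq_fintype_card, Fintype.card_subtype, ← hm]
  calc (#{x : Fin n → Bool | (hammingDist x (cyclicShift x k) : ℝ) < ε * n} : ℝ)
      ≤ #{x : Fin n → Bool | (#(shiftDiffSet x k) : ℝ) ≤ 2 * ε * (n - k : ℕ)} := by
        exact_mod_cast card_le_card hsub
    _ ≤ 2 ^ k * #{t : Finset (Fin (n - k)) | (#t : ℝ) ≤ 2 * ε * (n - k : ℕ)} := by
        exact_mod_cast card_filter_shiftDiffSet_le hk (by omega)
          fun t ↦ (#t : ℝ) ≤ 2 * ε * (n - k : ℕ)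
    _ ≤ 2 ^ k * 2 ^ (binEntropy (2 * ε) * (n - k : ℕ)) := by
        gcongr
        simpa using card_filter_card_le_mul_le_two_rpow_binEntropy (α := Fin (n - k)) (p := 2 * ε)
          (by linarith) (by linarith)
end

section
/- Let V be a type of propositional variables and let Φ be a finite set of clauses over V such that every clause of Φ has exactly n variables. If the cardinality of Φ is strictly less than 2^n, then there exists an assignment a : V → Bool that satisfies every clause of Φ. -/
/-!
Identify an assignment to the finitely many variables `U` occurring in `Φ` with the subset of `U`
it sets to `true`. A clause with `n` variables is falsified by at most `2 ^ (#U - n)` of the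
`2 ^ #U` such subsets, so fewer than `2 ^ n` clauses cannot falsify all of them.
-/

open Finset

section

variable {V : Type*} [DecidableEq V]

def falsifyingSubsets (U S : Finset V) (φ : V → Bool) : Finset (Finset V) :=
  U.powerset.filter fun T => ∀ v ∈ S, decide (v ∈ T) = φ v

theorem falsifyingSubsets_subset_image (U S : Finset V) (φ : V → Bool) :
    falsifyingSubsets U S φ ⊆ (U \ S).powerset.image (· ∪ S.filter (φ ·)) := by
  intro T hT
  simp only [falsifyingSubsets, mem_filter, mem_powerset] at hT
  refine mem_image.2 ⟨T \ S, mem_powerset.2 (sdiff_subset_sdiff hT.1 le_rfl), ?_⟩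
  ext v
  by_cases hv : v ∈ S
  · simp [hv, ← hT.2 v hv]
  · simp [hv]

theorem card_falsifyingSubsets_mul_le {U S : Finset V} (φ : V → Bool) (hS : S ⊆ U) :
    #(falsifyingSubsets U S φ) * 2 ^ #S ≤ 2 ^ #U :=
  calc #(falsifyingSubsets U S φ) * 2 ^ #S
      ≤ #(U \ S).powerset * 2 ^ #S := by
        refine Nat.mul_le_mul_right _ ?_
        exact (card_le_card (falsifyingSubsets_subset_image U S φ)).trans card_image_le
    _ = 2 ^ #U := by rw [card_powerset, ← pow_add, card_sdiff_add_card_eq_card hS]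

theorem card_biUnion_falsifyingSubsets_lt {U : Finset V} {n : ℕ}
    {Φ : Finset (Finset V × (V → Bool))} (hvar : ∀ C ∈ Φ, #C.1 = n) (hsub : ∀ C ∈ Φ, C.1 ⊆ U)
    (hcard : #Φ < 2 ^ n) :
    #(Φ.biUnion fun C => falsifyingSubsets U C.1 C.2) < 2 ^ #U := by
  refine Nat.lt_of_mul_lt_mul_right (a := 2 ^ n) ?_
  calc #(Φ.biUnion fun C => falsifyingSubsets U C.1 C.2) * 2 ^ n
      ≤ (∑ C ∈ Φ, #(falsifyingSubsets U C.1 C.2)) * 2 ^ n := by gcongr; exact card_biUnion_le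
    _ = ∑ C ∈ Φ, #(falsifyingSubsets U C.1 C.2) * 2 ^ #C.1 := by
        rw [sum_mul]
        exact sum_congr rfl fun C hC => by rw [hvar C hC]
    _ ≤ ∑ _C ∈ Φ, 2 ^ #U := sum_le_sum fun C hC => card_falsifyingSubsets_mul_le C.2 (hsub C hC)
    _ = #Φ * 2 ^ #U := by rw [sum_const, smul_eq_mul]
    _ < 2 ^ n * 2 ^ #U := by gcongr
    _ = 2 ^ #U * 2 ^ n := mul_comm ..

end

/-- If every clause of a finite CNF `Φ` has exactly `n` variables and `Φ` has fewer
than `2^n` clauses, then `Φ` is satisfiable.  A clause is a pair `(S, φ)` of its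
variable set `S` and the forbidden assignment `φ` on `S`; an assignment `a`
satisfies it iff `a` differs from `φ` on some variable of `S`. -/
theorem cnf_satisfiable_of_card_lt {V : Type*} (n : ℕ)
    (Φ : Finset (Finset V × (V → Bool)))
    (hvar : ∀ C ∈ Φ, C.1.card = n) (hcard : Φ.card < 2 ^ n) :
    ∃ a : V → Bool, ∀ C ∈ Φ, ∃ v ∈ C.1, a v ≠ C.2 v := by
  classical
  set U := Φ.sup Prod.fst
  have hsub : ∀ C ∈ Φ, C.1 ⊆ U := fun C hC => le_sup hC
  have hlt : #(Φ.biUnion fun C => falsifyingSubsets U C.1 C.2) < #U.powerset := by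
    rw [card_powerset]
    exact card_biUnion_falsifyingSubsets_lt hvar hsub hcard
  obtain ⟨T, hTU, hT⟩ := exists_mem_notMem_of_card_lt_card hlt
  refine ⟨fun v => decide (v ∈ T), fun C hC => ?_⟩
  have hC : T ∉ falsifyingSubsets U C.1 C.2 := fun h => hT (mem_biUnion.2 ⟨C, hC, h⟩)
  simpa [falsifyingSubsets, mem_powerset.1 hTU] using hC
end

section
/- Let V be a type of propositional variables, let n ≥ 3, and let Φ be a finite set of clauses over V such that every clause of Φ has exactly n variables. Two clauses are neighbors if their variable sets intersect (in particular every clause is its own neighbor). If for every clause (S, φ) ∈ Φ the number of clauses (S', φ') ∈ Φ with S ∩ S' ≠ ∅ is at most 2^(n−3), then there exists an assignment a : V → Bool that satisfies every clause of Φ. -/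
open Finset
set_option maxHeartbeats 2000000

section Core
variable {α : Type*} [Fintype α] [DecidableEq α]

private def Gd (T : Finset (Finset α × (α → Bool))) : Finset (α → Bool) :=
  univ.filter (fun b => ∀ C ∈ T, ∃ v ∈ C.1, b v ≠ C.2 v)
private def Badd (C : Finset α × (α → Bool)) : Finset (α → Bool) :=
  univ.filter (fun b => ∀ v ∈ C.1, b v = C.2 v)
private lemma mem_Gd {b : α → Bool} {T : Finset (Finset α × (α → Bool))} :
    b ∈ Gd T ↔ ∀ C ∈ T, ∃ v ∈ C.1, b v ≠ C.2 v := by simp [Gd]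
private lemma mem_Badd {b : α → Bool} {C : Finset α × (α → Bool)} :
    b ∈ Badd C ↔ ∀ v ∈ C.1, b v = C.2 v := by simp [Badd]
private lemma Gd_anti {T T' : Finset (Finset α × (α → Bool))} (h : T' ⊆ T) :
    Gd T ⊆ Gd T' := by
  intro b hb; rw [mem_Gd] at hb ⊢; exact fun C hC => hb C (h hC)
private lemma card_fix (S : Finset α) (c : α → Bool) :
    (univ.filter (fun b : α → Bool => ∀ x ∉ S, b x = c x)).card = 2 ^ S.card := by
  rw [← Fintype.card_subtype]
  have e : {b : α → Bool // ∀ x ∉ S, b x = c x} ≃ ({x // x ∈ S} → Bool) :=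
    { toFun := fun b x => b.1 x.1
      invFun := fun g => ⟨fun x => if h : x ∈ S then g ⟨x, h⟩ else c x, by
        intro x hx; simp [hx]⟩
      left_inv := by
        rintro ⟨b, hb⟩
        ext x
        by_cases h : x ∈ S
        · simp [h]
        · simp [h, hb x h]
      right_inv := by
        intro g
        funext x
        simp }
  rw [Fintype.card_congr e]
  simp [Fintype.card_fun]

private lemma card_G_eq (C : Finset α × (α → Bool)) (T2 : Finset (Finset α × (α → Bool)))
    (hd : ∀ B ∈ T2, Disjoint C.1 B.1) :
    (Gd T2).card = 2 ^ C.1.card * (Badd C ∩ Gd T2).card := by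
  have hmap : ∀ b ∈ Gd T2, C.1.piecewise C.2 b ∈ Badd C ∩ Gd T2 := by
    intro b hb
    rw [mem_inter, mem_Badd, mem_Gd]
    constructor
    · intro v hv; simp [Finset.piecewise_eq_of_mem _ _ _ hv]
    · intro B hB
      obtain ⟨v, hv, hne⟩ := mem_Gd.1 hb B hB
      refine ⟨v, hv, ?_⟩
      have hvS : v ∉ C.1 := fun h => Finset.disjoint_left.1 (hd B hB) h hv
      rwa [Finset.piecewise_eq_of_notMem _ _ _ hvS]
  rw [Finset.card_eq_sum_card_fiberwise hmap]
  have hfib : ∀ c ∈ Badd C ∩ Gd T2,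
      ((Gd T2).filter (fun b => C.1.piecewise C.2 b = c)).card = 2 ^ C.1.card := by
    intro c hc
    rw [mem_inter, mem_Badd, mem_Gd] at hc
    have : (Gd T2).filter (fun b => C.1.piecewise C.2 b = c)
        = univ.filter (fun b : α → Bool => ∀ x ∉ C.1, b x = c x) := by
      ext b
      simp only [mem_filter, mem_univ, true_and]
      constructor
      · rintro ⟨_, heq⟩ x hx
        rw [← heq, Finset.piecewise_eq_of_notMem _ _ _ hx]
      · intro h
        constructor
        · rw [mem_Gd]
          intro B hB
          obtain ⟨v, hv, hne⟩ := hc.2 B hB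
          have hvS : v ∉ C.1 := fun hm => Finset.disjoint_left.1 (hd B hB) hm hv
          exact ⟨v, hv, by rw [h v hvS]; exact hne⟩
        · funext x
          by_cases hx : x ∈ C.1
          · rw [Finset.piecewise_eq_of_mem _ _ _ hx, hc.1 x hx]
          · rw [Finset.piecewise_eq_of_notMem _ _ _ hx, h x hx]
    rw [this, card_fix]
  rw [Finset.sum_congr rfl hfib, Finset.sum_const, smul_eq_mul, mul_comm]

private lemma key (n : ℕ) (hn : 3 ≤ n) (Ψ : Finset (Finset α × (α → Bool)))
    (hvar : ∀ C ∈ Ψ, C.1.card = n)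
    (hnbr : ∀ C ∈ Ψ, (Ψ.filter (fun C' => (C.1 ∩ C'.1).Nonempty)).card ≤ 2 ^ (n - 3))
    (T : Finset (Finset α × (α → Bool))) (hT : T ⊆ Ψ) :
    ∀ C ∈ Ψ, 2 ^ (n - 1) * (Badd C ∩ Gd T).card ≤ (Gd T).card := by
  obtain ⟨k, hk⟩ : ∃ k, T.card = k := ⟨_, rfl⟩
  induction k using Nat.strong_induction_on generalizing T with
  | _ k IH =>
  intro C hC
  have IH : ∀ T' : Finset (Finset α × (α → Bool)), T'.card < k → T' ⊆ Ψ →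
      ∀ C ∈ Ψ, 2 ^ (n - 1) * (Badd C ∩ Gd T').card ≤ (Gd T').card := by
    intro T' h hs
    exact IH T'.card (hk ▸ h) T' hs rfl
  set T1 : Finset (Finset α × (α → Bool)) :=
    T.filter (fun B => (C.1 ∩ B.1).Nonempty) with hT1
  set T2 : Finset (Finset α × (α → Bool)) := T \ T1 with hT2
  have hT1T : T1 ⊆ T := filter_subset _ _
  have hT2T : T2 ⊆ T := sdiff_subset
  have hd : ∀ B ∈ T2, Disjoint C.1 B.1 := by
    intro B hB
    rw [hT2, mem_sdiff, hT1, mem_filter] at hB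
    rw [Finset.disjoint_iff_inter_eq_empty]
    exact not_nonempty_iff_eq_empty.1 (fun hne => hB.2 ⟨hB.1, hne⟩)
  have hGsub : Gd T ⊆ Gd T2 := Gd_anti hT2T
  have hA2 : (Gd T2).card = 2 ^ C.1.card * (Badd C ∩ Gd T2).card := card_G_eq C T2 hd
  rw [hvar C hC] at hA2
  have hAle : (Badd C ∩ Gd T).card ≤ (Badd C ∩ Gd T2).card :=
    card_le_card (fun b hb => mem_inter.2 ⟨(mem_inter.1 hb).1, hGsub (mem_inter.1 hb).2⟩)
  rcases T1.eq_empty_or_nonempty with h1 | h1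
  · -- no neighbours in T : T2 = T
    have hTT : T2 = T := by rw [hT2, h1, sdiff_empty]
    rw [hTT] at hA2
    calc 2 ^ (n - 1) * (Badd C ∩ Gd T).card
        ≤ 2 ^ n * (Badd C ∩ Gd T).card :=
          Nat.mul_le_mul_right _ (Nat.pow_le_pow_right (by norm_num) (Nat.sub_le n 1))
      _ = (Gd T).card := hA2.symm
  · -- T1 nonempty, so T2 ⊂ T and induction applies
    have hssub : T2 ⊂ T := by
      obtain ⟨B, hB⟩ := h1
      refine Finset.ssubset_iff_of_subset hT2T |>.2 ⟨B, hT1T hB, ?_⟩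
      rw [hT2, mem_sdiff]; exact fun h => h.2 hB
    have hIH : ∀ B ∈ T1, 2 ^ (n - 1) * (Badd B ∩ Gd T2).card ≤ (Gd T2).card := by
      intro B hB
      exact IH T2 (hk ▸ Finset.card_lt_card hssub) (fun x hx => hT (hT2T hx)) B (hT (hT1T hB))
    set Sig : ℕ := ∑ B ∈ T1, (Badd B ∩ Gd T2).card with hSig
    have h1' : 2 ^ (n - 1) * Sig ≤ T1.card * (Gd T2).card := by
      rw [hSig, Finset.mul_sum]
      calc ∑ B ∈ T1, 2 ^ (n - 1) * (Badd B ∩ Gd T2).card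
          ≤ ∑ B ∈ T1, (Gd T2).card := Finset.sum_le_sum hIH
        _ = T1.card * (Gd T2).card := by rw [Finset.sum_const, smul_eq_mul]
    have h2 : T1.card ≤ 2 ^ (n - 3) := by
      refine le_trans (card_le_card ?_) (hnbr C hC)
      intro B hB
      rw [hT1, mem_filter] at hB
      rw [mem_filter]
      exact ⟨hT hB.1, hB.2⟩
    have h3 : (Gd T2).card ≤ (Gd T).card + Sig := by
      have hsub : Gd T2 ⊆ Gd T ∪ T1.biUnion (fun B => Badd B ∩ Gd T2) := by
        intro b hb
        rw [mem_union]
        by_cases hall : ∀ B ∈ T1, ∃ v ∈ B.1, b v ≠ B.2 v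
        · left
          rw [mem_Gd]
          intro B hB
          by_cases hB1 : B ∈ T1
          · exact hall B hB1
          · exact mem_Gd.1 hb B (by rw [hT2, mem_sdiff]; exact ⟨hB, hB1⟩)
        · right
          push_neg at hall
          obtain ⟨B, hB, hbad⟩ := hall
          rw [mem_biUnion]
          refine ⟨B, hB, mem_inter.2 ⟨mem_Badd.2 ?_, hb⟩⟩
          intro v hv
          have := hbad v hv
          simpa using this
      calc (Gd T2).card ≤ (Gd T ∪ T1.biUnion (fun B => Badd B ∩ Gd T2)).card :=
            card_le_card hsub
        _ ≤ (Gd T).card + (T1.biUnion (fun B => Badd B ∩ Gd T2)).card := card_union_le _ _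
        _ ≤ (Gd T).card + Sig := by
            exact Nat.add_le_add_left (card_biUnion_le) _
    -- arithmetic
    have hp1 : 2 ^ (n - 1) = 4 * 2 ^ (n - 3) := by
      have : n - 1 = (n - 3) + 2 := by omega
      rw [this, pow_add]; ring
    have h4Sig : 4 * Sig ≤ (Gd T2).card := by
      have : 2 ^ (n - 3) * (4 * Sig) ≤ 2 ^ (n - 3) * (Gd T2).card := by
        calc 2 ^ (n - 3) * (4 * Sig) = 2 ^ (n - 1) * Sig := by rw [hp1]; ring
          _ ≤ T1.card * (Gd T2).card := h1'
          _ ≤ 2 ^ (n - 3) * (Gd T2).card := Nat.mul_le_mul_right _ h2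
      exact Nat.le_of_mul_le_mul_left this (Nat.pos_of_ne_zero (by positivity))
    have hG2 : (Gd T2).card = 2 * (2 ^ (n - 1) * (Badd C ∩ Gd T2).card) := by
      have hpow2 : 2 ^ n = 2 * 2 ^ (n - 1) := by
        rw [← pow_succ']
        congr 1
        omega
      rw [hA2, hpow2, mul_assoc]
    have hX : 2 ^ (n - 1) * (Badd C ∩ Gd T).card ≤ 2 ^ (n - 1) * (Badd C ∩ Gd T2).card :=
      Nat.mul_le_mul_left _ hAle
    omega

private lemma Gd_nonempty (n : ℕ) (hn : 3 ≤ n) (Ψ : Finset (Finset α × (α → Bool)))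
    (hvar : ∀ C ∈ Ψ, C.1.card = n)
    (hnbr : ∀ C ∈ Ψ, (Ψ.filter (fun C' => (C.1 ∩ C'.1).Nonempty)).card ≤ 2 ^ (n - 3))
    (T : Finset (Finset α × (α → Bool))) (hT : T ⊆ Ψ) : (Gd T).Nonempty := by
  obtain ⟨k, hk⟩ : ∃ k, T.card = k := ⟨_, rfl⟩
  induction k using Nat.strong_induction_on generalizing T with
  | _ k IH =>
  rcases T.eq_empty_or_nonempty with h | ⟨C, hC⟩
  · exact ⟨fun _ => false, by simp [h, mem_Gd]⟩
  · set T' := T.erase C with hT'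
    have hss : T' ⊂ T := erase_ssubset hC
    have hT'Ψ : T' ⊆ Ψ := fun x hx => hT (hss.1 hx)
    have hne : (Gd T').Nonempty := IH T'.card (hk ▸ Finset.card_lt_card hss) T' hT'Ψ rfl
    have hkey := key n hn Ψ hvar hnbr T' hT'Ψ C (hT hC)
    have hpow : 2 ≤ 2 ^ (n - 1) := by
      calc 2 = 2 ^ 1 := by norm_num
        _ ≤ 2 ^ (n - 1) := Nat.pow_le_pow_right (by norm_num) (by omega)
    have hcard : (Badd C ∩ Gd T').card < (Gd T').card := by
      have hpos : 0 < (Gd T').card := card_pos.2 hne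
      nlinarith [hkey, hpow, Nat.zero_le ((Badd C ∩ Gd T').card)]
    have hex : ∃ b ∈ Gd T', b ∉ Badd C := by
      by_contra h
      push_neg at h
      have hsub : Gd T' ⊆ Badd C ∩ Gd T' := fun b hb => mem_inter.2 ⟨h b hb, hb⟩
      exact absurd (card_le_card hsub) (not_le.2 hcard)
    obtain ⟨b, hbG, hbB⟩ := hex
    refine ⟨b, mem_Gd.2 ?_⟩
    intro B hB
    by_cases hBC : B = C
    · subst hBC
      rw [mem_Badd] at hbB
      push_neg at hbB
      obtain ⟨v, hv, hne⟩ := hbB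
      exact ⟨v, hv, hne⟩
    · exact mem_Gd.1 hbG B (mem_erase.2 ⟨hBC, hB⟩)

private lemma core_sat (n : ℕ) (hn : 3 ≤ n) (Ψ : Finset (Finset α × (α → Bool)))
    (hvar : ∀ C ∈ Ψ, C.1.card = n)
    (hnbr : ∀ C ∈ Ψ, (Ψ.filter (fun C' => (C.1 ∩ C'.1).Nonempty)).card ≤ 2 ^ (n - 3)) :
    ∃ a : α → Bool, ∀ C ∈ Ψ, ∃ v ∈ C.1, a v ≠ C.2 v := by
  obtain ⟨b, hb⟩ := Gd_nonempty n hn Ψ hvar hnbr Ψ Finset.Subset.rfl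
  exact ⟨b, mem_Gd.1 hb⟩

end Core

/-- Lovász-local-lemma-style criterion for CNF satisfiability: if every clause of a
finite CNF `Φ` has exactly `n ≥ 3` variables and each clause has at most `2^(n−3)`
neighbours in `Φ` (clauses sharing a variable, including itself), then `Φ` is
satisfiable.  A clause is a pair `(S, φ)` of its variable set `S` and the forbidden
assignment `φ` on `S`; an assignment `a` satisfies it iff `a` differs from `φ` on
some variable of `S`. -/
theorem cnf_satisfiable_of_few_neighbors {V : Type*} [DecidableEq V] (n : ℕ) (hn : 3 ≤ n)
    (Φ : Finset (Finset V × (V → Bool)))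
    (hvar : ∀ C ∈ Φ, C.1.card = n)
    (hnbr : ∀ C ∈ Φ, (Φ.filter (fun C' => (C.1 ∩ C'.1).Nonempty)).card ≤ 2 ^ (n - 3)) :
    ∃ a : V → Bool, ∀ C ∈ Φ, ∃ v ∈ C.1, a v ≠ C.2 v := by
  classical
  set W : Finset V := Φ.biUnion (fun C => C.1) with hW
  have hsub : ∀ C ∈ Φ, C.1 ⊆ W := fun C hC v hv => mem_biUnion.2 ⟨C, hC, hv⟩
  set g : (Finset V × (V → Bool)) → (Finset {x // x ∈ W} × ({x // x ∈ W} → Bool)) :=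
    fun C => (W.attach.filter (fun x => (x : V) ∈ C.1), fun x => C.2 x) with hg
  set Ψ : Finset (Finset {x // x ∈ W} × ({x // x ∈ W} → Bool)) := Φ.image g with hΨ
  have hgmem : ∀ {C x}, x ∈ (g C).1 ↔ (x : V) ∈ C.1 := by
    intro C x
    rw [hg]
    simp
  have hcard : ∀ C ∈ Φ, (g C).1.card = C.1.card := by
    intro C hC
    refine Finset.card_bij (fun x _ => (x : V)) ?_ ?_ ?_
    · intro x hx
      exact hgmem.1 hx
    · intro x _ y _ hxy
      exact Subtype.ext hxy
    · intro v hv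
      exact ⟨⟨v, hsub C hC hv⟩, hgmem.2 hv, rfl⟩
  have hvarΨ : ∀ D ∈ Ψ, D.1.card = n := by
    intro D hD
    obtain ⟨C, hC, rfl⟩ := mem_image.1 hD
    rw [hcard C hC, hvar C hC]
  have hnbrΨ : ∀ D ∈ Ψ, (Ψ.filter (fun D' => (D.1 ∩ D'.1).Nonempty)).card ≤ 2 ^ (n - 3) := by
    intro D hD
    obtain ⟨C, hC, rfl⟩ := mem_image.1 hD
    have hsub2 : Ψ.filter (fun D' => ((g C).1 ∩ D'.1).Nonempty)
        ⊆ (Φ.filter (fun C' => (C.1 ∩ C'.1).Nonempty)).image g := by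
      intro D' hD'
      rw [mem_filter] at hD'
      obtain ⟨C', hC', rfl⟩ := mem_image.1 hD'.1
      obtain ⟨x, hx⟩ := hD'.2
      rw [mem_inter] at hx
      refine mem_image_of_mem g (mem_filter.2 ⟨hC', ⟨x, mem_inter.2 ⟨?_, ?_⟩⟩⟩)
      · exact hgmem.1 hx.1
      · exact hgmem.1 hx.2
    calc (Ψ.filter (fun D' => ((g C).1 ∩ D'.1).Nonempty)).card
        ≤ ((Φ.filter (fun C' => (C.1 ∩ C'.1).Nonempty)).image g).card := card_le_card hsub2
      _ ≤ (Φ.filter (fun C' => (C.1 ∩ C'.1).Nonempty)).card := card_image_le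
      _ ≤ 2 ^ (n - 3) := hnbr C hC
  obtain ⟨b, hb⟩ := core_sat n hn Ψ hvarΨ hnbrΨ
  refine ⟨fun v => if h : v ∈ W then b ⟨v, h⟩ else false, ?_⟩
  intro C hC
  obtain ⟨x, hx, hne⟩ := hb (g C) (mem_image_of_mem g hC)
  refine ⟨(x : V), hgmem.1 hx, ?_⟩
  show (if h : (x : V) ∈ W then b ⟨(x : V), h⟩ else false) ≠ C.2 (x : V)
  rw [dif_pos x.2]
  exact hne
end

section
/- Let m ≥ 1 and let F be a finite set of strings over the alphabet Fin m, each of length at least 2; for each j ≥ 2 let a_j be the number of elements of F of length j. If there exists a real number x > 0 such that ∑_{j≥2} a_j · x^j < m·x − 1, then for every natural number N there exists a string of length N over Fin m that avoids F. -/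
/-!
Let `a n` be the number of strings of length `n` avoiding `F`. Extending each of them by a letter
gives `m * a n` strings of length `n + 1`; those that do not avoid `F` end in some `f ∈ F`, and
their first `n + 1 - |f|` letters form an avoiding string. Hence
`m * a n ≤ a (n + 1) + ∑_{f ∈ F} a (n + 1 - |f|)`. By induction one shows `a n ≤ x * a (n + 1)`:
then `a (n + 1 - |f|) ≤ x ^ (|f| - 1) * a n`, so the recurrence gives
`(m * x - ∑_{f ∈ F} x ^ |f|) * a n ≤ x * a (n + 1)`, and the factor on the left exceeds `1`.
Since `a 0 = 1`, every `a n` is positive.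
-/

open Finset

theorem List.exists_prefix_append_eq_of_infix_concat {α : Type*} {f w : List α} {a : α}
    (h : f <:+: w ++ [a]) (hw : ¬ f <:+: w) : ∃ p, p <+: w ∧ p ++ f = w ++ [a] := by
  obtain ⟨p, hp⟩ := (List.infix_concat_iff.mp h).resolve_right hw
  have hf : f ≠ [] := fun hf => hw (hf ▸ List.nil_infix)
  refine ⟨p, List.prefix_of_prefix_length_le ⟨f, hp⟩ (w.prefix_append [a]) ?_, hp⟩
  have := congrArg List.length hp
  have := List.length_pos_iff.mpr hf
  simp only [List.length_append, List.length_singleton] at *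
  omega

namespace ForbiddenSubstrings

section Growth

variable {ι : Type*} (s : Finset ι) (ℓ : ι → ℕ) (a : ℕ → ℝ) {c x : ℝ}

theorem le_mul_succ_of_recurrence (hℓ : ∀ i ∈ s, ℓ i ≠ 0) (hx : 0 < x)
    (hsum : ∑ i ∈ s, x ^ ℓ i < c * x - 1) {n : ℕ}
    (hrec : c * a n ≤ a (n + 1) + ∑ i ∈ s with ℓ i ≤ n + 1, a (n + 1 - ℓ i))
    (hpos : 0 < a n) (hprev : ∀ k ≤ n, a k ≤ x ^ (n - k) * a n) :
    a n ≤ x * a (n + 1) := by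
  have hterm : ∀ i ∈ s, ℓ i ≤ n + 1 → x * a (n + 1 - ℓ i) ≤ x ^ ℓ i * a n := by
    intro i hi hle
    have hℓi := hℓ i hi
    calc x * a (n + 1 - ℓ i) ≤ x * (x ^ (ℓ i - 1) * a n) := by
          rw [show ℓ i - 1 = n - (n + 1 - ℓ i) by omega]
          gcongr
          exact hprev _ (by omega)
      _ = x ^ ℓ i * a n := by rw [← mul_assoc, mul_pow_sub_one hℓi]
  have htail : x * ∑ i ∈ s with ℓ i ≤ n + 1, a (n + 1 - ℓ i) ≤ (∑ i ∈ s, x ^ ℓ i) * a n := by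
    rw [mul_sum, sum_mul]
    exact (sum_le_sum fun i hi => hterm i (mem_filter.mp hi).1 (mem_filter.mp hi).2).trans
      (sum_le_sum_of_subset_of_nonneg (filter_subset _ _) fun i _ _ => by positivity)
  linarith [mul_le_mul_of_nonneg_left hrec hx.le, mul_lt_mul_of_pos_right hsum hpos]

theorem pos_of_recurrence (hℓ : ∀ i ∈ s, ℓ i ≠ 0) (hx : 0 < x)
    (hsum : ∑ i ∈ s, x ^ ℓ i < c * x - 1) (h₀ : 0 < a 0)
    (hrec : ∀ n, c * a n ≤ a (n + 1) + ∑ i ∈ s with ℓ i ≤ n + 1, a (n + 1 - ℓ i)) (n : ℕ) :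
    0 < a n := by
  suffices ∀ n, 0 < a n ∧ ∀ k ≤ n, a k ≤ x ^ (n - k) * a n from (this n).1
  intro n
  induction n with
  | zero => exact ⟨h₀, fun k hk => by simp [Nat.le_zero.mp hk]⟩
  | succ n ih =>
    obtain ⟨hpos, hprev⟩ := ih
    have hstep := le_mul_succ_of_recurrence s ℓ a hℓ hx hsum (hrec n) hpos hprev
    refine ⟨pos_of_mul_pos_right (hpos.trans_le hstep) hx.le, fun k hk => ?_⟩
    rcases hk.eq_or_lt with rfl | hk
    · simp
    calc a k ≤ x ^ (n - k) * a n := hprev k (by omega)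
      _ ≤ x ^ (n - k) * (x * a (n + 1)) := by gcongr
      _ = x ^ (n + 1 - k) * a (n + 1) := by
        rw [← mul_assoc, ← pow_succ, Nat.sub_add_comm (by omega)]

end Growth

section Counting

variable {α : Type*} [Fintype α] [DecidableEq α]

def avoidingOfLength (F : Finset (List α)) (n : ℕ) : Finset (List α) :=
  ((univ : Finset (List.Vector α n)).image List.Vector.toList).filter
    fun w => ∀ f ∈ F, ¬ f <:+: w

variable {F : Finset (List α)} {n : ℕ}

theorem mem_avoidingOfLength {w : List α} :
    w ∈ avoidingOfLength F n ↔ w.length = n ∧ ∀ f ∈ F, ¬ f <:+: w := by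
  simp only [avoidingOfLength, mem_filter, mem_image, mem_univ, true_and]
  exact and_congr_left' ⟨fun ⟨v, hv⟩ => hv ▸ v.toList_length, fun h => ⟨⟨w, h⟩, rfl⟩⟩

theorem nil_mem_avoidingOfLength_zero (hF : ∀ f ∈ F, f ≠ []) : [] ∈ avoidingOfLength F 0 :=
  mem_avoidingOfLength.mpr ⟨rfl, fun f hf h => hF f hf (List.eq_nil_of_infix_nil h)⟩

theorem card_avoidingOfLength_mul_le (F : Finset (List α)) (n : ℕ) :
    #(avoidingOfLength F n) * Fintype.card α ≤ #(avoidingOfLength F (n + 1)) +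
      ∑ f ∈ F with f.length ≤ n + 1, #(avoidingOfLength F (n + 1 - f.length)) := by
  set extensions := (avoidingOfLength F n ×ˢ univ).image fun p : List α × α => p.1 ++ [p.2]
  have hcard : #extensions = #(avoidingOfLength F n) * Fintype.card α := by
    rw [card_image_of_injective _ fun p q h => ?_, card_product, card_univ]
    obtain ⟨h₁, h₂⟩ := List.append_singleton_inj.mp h
    exact Prod.ext h₁ h₂
  have hsub : extensions ⊆ avoidingOfLength F (n + 1) ∪ (F.filter (·.length ≤ n + 1)).biUnion
      fun f => (avoidingOfLength F (n + 1 - f.length)).image (· ++ f) := by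
    intro u hu
    obtain ⟨⟨w, a⟩, hwa, rfl⟩ := mem_image.mp hu
    obtain ⟨hwlen, hw⟩ := mem_avoidingOfLength.mp (mem_product.mp hwa).1
    by_cases hu : ∀ f ∈ F, ¬ f <:+: w ++ [a]
    · exact mem_union_left _ (mem_avoidingOfLength.mpr ⟨by simp [hwlen], hu⟩)
    push Not at hu
    obtain ⟨f, hf, hfu⟩ := hu
    obtain ⟨p, hpw, hpf⟩ := List.exists_prefix_append_eq_of_infix_concat hfu (hw f hf)
    have hlen : p.length + f.length = n + 1 := by simpa [hwlen] using congrArg List.length hpf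
    refine mem_union_right _ <| mem_biUnion.mpr
      ⟨f, mem_filter.mpr ⟨hf, by omega⟩, mem_image.mpr ⟨p, ?_, hpf⟩⟩
    exact mem_avoidingOfLength.mpr
      ⟨by omega, fun g hg hgp => hw g hg (hgp.trans hpw.isInfix)⟩
  calc #(avoidingOfLength F n) * Fintype.card α = #extensions := hcard.symm
    _ ≤ _ := card_le_card hsub
    _ ≤ _ := card_union_le _ _
    _ ≤ _ := Nat.add_le_add_left (card_biUnion_le.trans (sum_le_sum fun f _ => card_image_le)) _

theorem card_avoidingOfLength_pos (hF : ∀ f ∈ F, f ≠ []) {x : ℝ} (hx : 0 < x)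
    (hsum : ∑ f ∈ F, x ^ f.length < Fintype.card α * x - 1) (n : ℕ) :
    0 < #(avoidingOfLength F n) := by
  have h₀ := card_pos.mpr ⟨[], nil_mem_avoidingOfLength_zero hF⟩
  exact_mod_cast pos_of_recurrence F List.length (fun n => (#(avoidingOfLength F n) : ℝ))
    (fun f hf => mt List.length_eq_zero_iff.mp (hF f hf)) hx hsum (by exact_mod_cast h₀)
    (fun n => by rw [mul_comm]; exact_mod_cast card_avoidingOfLength_mul_le F n) n

end Counting

theorem tsum_card_fiber_mul_eq_sum {ι : Type*} (s : Finset ι) (g : ι → ℕ) (y : ℕ → ℝ) :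
    ∑' j, (#{i ∈ s | g i = j} : ℝ) * y j = ∑ i ∈ s, y (g i) := by
  rw [sum_comp, tsum_eq_sum (s := s.image g) fun j hj => ?_]
  · simp [nsmul_eq_mul]
  · simp_all

end ForbiddenSubstrings

theorem exists_long_string_avoiding_general (m : ℕ)
    (F : Finset (List (Fin m))) (hF : ∀ w ∈ F, 2 ≤ w.length)
    (hx : ∃ x : ℝ, 0 < x ∧
      ∑' j : ℕ, ((F.filter (fun w => w.length = j)).card : ℝ) * x ^ j < m * x - 1) :
    ∀ N : ℕ, ∃ w : List (Fin m), w.length = N ∧ ∀ f ∈ F, ¬ f <:+: w := by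
  obtain ⟨x, hx, hsum⟩ := hx
  rw [ForbiddenSubstrings.tsum_card_fiber_mul_eq_sum F List.length (x ^ ·)] at hsum
  have hF' : ∀ f ∈ F, f ≠ [] := fun f hf =>
    List.ne_nil_of_length_pos (Nat.zero_lt_two.trans_le (hF f hf))
  intro N
  obtain ⟨w, hw⟩ := card_pos.mp <|
    ForbiddenSubstrings.card_avoidingOfLength_pos hF' hx (by simpa using hsum) N
  exact ⟨w, ForbiddenSubstrings.mem_avoidingOfLength.mp hw⟩

/-- Miller's criterion: if `F` is a finite set of forbidden strings over `Fin m`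
(each of length ≥ 2) with `a_j` forbidden strings of length `j`, and there is a real
`x > 0` with `∑_{j≥2} a_j·x^j < m·x − 1`, then there exist arbitrarily long strings
avoiding all forbidden substrings. -/
theorem exists_long_string_avoiding (m : ℕ) (hm : 1 ≤ m)
    (F : Finset (List (Fin m))) (hF : ∀ w ∈ F, 2 ≤ w.length)
    (hx : ∃ x : ℝ, 0 < x ∧
      ∑' j : ℕ, ((F.filter (fun w => w.length = j)).card : ℝ) * x ^ j < m * x - 1) :
    ∀ N : ℕ, ∃ w : List (Fin m), w.length = N ∧ ∀ f ∈ F, ¬ f <:+: w :=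
  exists_long_string_avoiding_general m F hF hx
end

section
/- Let m ≥ 1 and let F be a finite set of strings over the alphabet Fin m, each of length at least 2; for each j ≥ 2 let a_j be the number of elements of F of length j. If there exists a real number x > 0 such that ∑_{j≥2} a_j · x^j < m·x − 1, then there exists an infinite sequence s : ℕ → Fin m such that no element of F occurs as a contiguous block of s, i.e., for all i and every w ∈ F, w is not equal to the list (s i, s (i+1), …, s (i + length w − 1)). -/
/-!
Let `c n` be the number of words of length `n` avoiding `F`. Appending a letter to an avoiding
word of length `n` gives either an avoiding word of length `n + 1` or a word ending in some
`u ∈ F` whose remaining prefix is an avoiding word of length `n + 1 - |u|`; hence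
`m c n ≤ c (n + 1) + ∑_{u ∈ F} c (n + 1 - |u|)`. If `∑_{u ∈ F} x ^ |u| ≤ m x - 1`, strong
induction turns this into `c n ≤ x c (n + 1)`, so `c n > 0` for every `n`. Avoiding words of every
length over a finite alphabet yield an infinite avoiding sequence by compactness of `ℕ → Fin m`.
-/

open Finset

theorem tsum_card_filter_mul_eq_sum {ι : Type*} (s : Finset ι) (g : ι → ℕ) (f : ℕ → ℝ) :
    ∑' j : ℕ, (#(s.filter fun a => g a = j) : ℝ) * f j = ∑ a ∈ s, f (g a) := by
  rw [tsum_eq_sum (s := s.image g), sum_comp]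
  · simp only [nsmul_eq_mul]
  · intro j hj
    rw [filter_false_of_mem fun a ha hga => hj (mem_image.2 ⟨a, ha, hga⟩)]
    simp

section Growth

variable {c : ℕ → ℝ} {x : ℝ}

theorem le_pow_mul_of_forall_lt_le_mul_succ (hx : 0 ≤ x) {n : ℕ}
    (h : ∀ k < n, c k ≤ x * c (k + 1)) {k : ℕ} (hk : k ≤ n) : c k ≤ x ^ (n - k) * c n := by
  induction hk using Nat.decreasingInduction with
  | self => simp
  | of_succ k hk ih =>
    calc c k ≤ x * c (k + 1) := h k hk
      _ ≤ x * (x ^ (n - (k + 1)) * c n) := by gcongr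
      _ = x ^ (n - k) * c n := by
        rw [← mul_assoc, ← pow_succ', show n - (k + 1) + 1 = n - k by omega]

theorem le_mul_succ_of_le_add_sum {ι : Type*} (s : Finset ι) (ℓ : ι → ℕ) (hℓ : ∀ i ∈ s, 0 < ℓ i)
    (hc : ∀ n, 0 ≤ c n) {m : ℝ} (hx : 0 < x) (hsum : ∑ i ∈ s, x ^ ℓ i ≤ m * x - 1)
    (hrec : ∀ n, m * c n ≤ c (n + 1) + ∑ i ∈ s with ℓ i ≤ n + 1, c (n + 1 - ℓ i)) (n : ℕ) :
    c n ≤ x * c (n + 1) := by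
  induction n using Nat.strong_induction_on with | _ n ih => ?_
  have hterm : ∀ i ∈ {i ∈ s | ℓ i ≤ n + 1}, x * c (n + 1 - ℓ i) ≤ x ^ ℓ i * c n := by
    intro i hi
    obtain ⟨hi, hle⟩ := mem_filter.1 hi
    have hpos := hℓ i hi
    calc x * c (n + 1 - ℓ i) ≤ x * (x ^ (n - (n + 1 - ℓ i)) * c n) := by
          gcongr; exact le_pow_mul_of_forall_lt_le_mul_succ hx.le ih (by omega)
      _ = x ^ ℓ i * c n := by
        rw [← mul_assoc, ← pow_succ', show n - (n + 1 - ℓ i) + 1 = ℓ i by omega]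
  have htail : x * ∑ i ∈ s with ℓ i ≤ n + 1, c (n + 1 - ℓ i) ≤ (∑ i ∈ s, x ^ ℓ i) * c n :=
    calc x * ∑ i ∈ s with ℓ i ≤ n + 1, c (n + 1 - ℓ i)
        = ∑ i ∈ s with ℓ i ≤ n + 1, x * c (n + 1 - ℓ i) := mul_sum _ _ _
      _ ≤ ∑ i ∈ s with ℓ i ≤ n + 1, x ^ ℓ i * c n := sum_le_sum hterm
      _ ≤ ∑ i ∈ s, x ^ ℓ i * c n :=
        sum_le_sum_of_subset_of_nonneg (filter_subset _ _) fun i _ _ => by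
          have := hc n; positivity
      _ = (∑ i ∈ s, x ^ ℓ i) * c n := (sum_mul _ _ _).symm
  linarith [mul_le_mul_of_nonneg_left (hrec n) hx.le, mul_le_mul_of_nonneg_right hsum (hc n)]

end Growth

section Avoiding

variable {α : Type*} (F : Finset (List α))

def Avoids (w : List α) : Prop := ∀ u ∈ F, ¬ u <:+: w

variable {F}

theorem Avoids.infix {v w : List α} (hw : Avoids F w) (hv : v <:+: w) : Avoids F v :=
  fun u hu huv => hw u hu (huv.trans hv)

variable [Fintype α] [DecidableEq α]

instance : DecidablePred (Avoids F) := fun w =>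
  inferInstanceAs (Decidable (∀ u ∈ F, ¬ u <:+: w))

variable (F) in
def avoidingWords (n : ℕ) : Finset (List α) :=
  {w ∈ (univ : Finset (Fin n → α)).image List.ofFn | Avoids F w}

theorem mem_avoidingWords {n : ℕ} {w : List α} :
    w ∈ avoidingWords F n ↔ w.length = n ∧ Avoids F w := by
  simp only [avoidingWords, mem_filter, mem_image, mem_univ, true_and]
  constructor
  · rintro ⟨⟨f, rfl⟩, hw⟩
    exact ⟨List.length_ofFn, hw⟩
  · rintro ⟨rfl, hw⟩
    exact ⟨⟨fun i => w[i], List.ofFn_getElem⟩, hw⟩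

theorem avoidingWords_zero (hF : [] ∉ F) : avoidingWords F 0 = {[]} := by
  ext w
  simp only [mem_avoidingWords, mem_singleton, List.length_eq_zero_iff, and_iff_left_iff_imp]
  rintro rfl u hu huw
  exact hF (List.eq_nil_of_infix_nil huw ▸ hu)

theorem concat_mem_avoidingWords_or_eq_append (hF : [] ∉ F) {n : ℕ} {v : List α}
    (hv : v ∈ avoidingWords F n) (a : α) :
    v ++ [a] ∈ avoidingWords F (n + 1) ∨
      ∃ u ∈ F, u.length ≤ n + 1 ∧ ∃ p ∈ avoidingWords F (n + 1 - u.length), p ++ u = v ++ [a] := by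
  obtain ⟨hvlen, hvF⟩ := mem_avoidingWords.1 hv
  by_cases hva : Avoids F (v ++ [a])
  · exact Or.inl (mem_avoidingWords.2 ⟨by simp [hvlen], hva⟩)
  simp only [Avoids, not_forall, not_not] at hva
  obtain ⟨u, hu, hinf⟩ := hva
  obtain ⟨p, hp⟩ := (List.infix_concat_iff.1 hinf).resolve_right (hvF u hu)
  have hlen : p.length + u.length = n + 1 := by simpa [hvlen] using congrArg List.length hp
  have hu0 : 0 < u.length := List.length_pos_iff.2 fun h => hF (h ▸ hu)
  have hpv : p <+: v :=
    List.prefix_of_prefix_length_le (hp ▸ List.prefix_append p u) (List.prefix_append v [a])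
      (by omega)
  exact Or.inr ⟨u, hu, by omega, p,
    mem_avoidingWords.2 ⟨by omega, hvF.infix hpv.isInfix⟩, hp⟩

theorem card_avoidingWords_mul_le (hF : [] ∉ F) (n : ℕ) :
    #(avoidingWords F n) * Fintype.card α ≤ #(avoidingWords F (n + 1)) +
      ∑ u ∈ F with u.length ≤ n + 1, #(avoidingWords F (n + 1 - u.length)) := by
  let T u := (avoidingWords F (n + 1 - u.length)).image (· ++ u)
  let P : Finset (List α × α) := avoidingWords F n ×ˢ univ
  have hmaps : Set.MapsTo (fun p : List α × α => p.1 ++ [p.2]) ↑P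
      ↑(avoidingWords F (n + 1) ∪ {u ∈ F | u.length ≤ n + 1}.biUnion T) := by
    rintro ⟨v, a⟩ hva
    rcases concat_mem_avoidingWords_or_eq_append hF (mem_product.1 hva).1 a with
      h | ⟨u, hu, hle, p, hp, he⟩
    · exact mem_union_left _ h
    · exact mem_union_right _
        (mem_biUnion.2 ⟨u, mem_filter.2 ⟨hu, hle⟩, mem_image.2 ⟨p, hp, he⟩⟩)
  have hinj : Set.InjOn (fun p : List α × α => p.1 ++ [p.2]) ↑P := fun p _ q _ h => by
    obtain ⟨h1, h2⟩ := List.append_inj' h rfl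
    exact Prod.ext h1 (List.singleton_inj.1 h2)
  calc #(avoidingWords F n) * Fintype.card α = #P := by rw [card_product, card_univ]
    _ ≤ #(avoidingWords F (n + 1) ∪ {u ∈ F | u.length ≤ n + 1}.biUnion T) :=
        card_le_card_of_injOn _ hmaps hinj
    _ ≤ #(avoidingWords F (n + 1)) + #({u ∈ F | u.length ≤ n + 1}.biUnion T) :=
        card_union_le _ _
    _ ≤ #(avoidingWords F (n + 1)) + ∑ u ∈ F with u.length ≤ n + 1, #(T u) := by
        gcongr; exact card_biUnion_le
    _ ≤ _ := Nat.add_le_add_left (sum_le_sum fun _ _ => card_image_le) _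

theorem avoidingWords_nonempty (hF : [] ∉ F) {x : ℝ} (hx : 0 < x)
    (hsum : ∑ u ∈ F, x ^ u.length ≤ Fintype.card α * x - 1) (n : ℕ) :
    (avoidingWords F n).Nonempty := by
  have hgrowth : ∀ n, (#(avoidingWords F n) : ℝ) ≤ x * #(avoidingWords F (n + 1)) :=
    le_mul_succ_of_le_add_sum F List.length
      (fun u hu => List.length_pos_iff.2 fun h => hF (h ▸ hu)) (fun _ => Nat.cast_nonneg _) hx
      hsum fun n => by exact_mod_cast (mul_comm _ _).trans_le (card_avoidingWords_mul_le hF n)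
  induction n with
  | zero => simp [avoidingWords_zero hF]
  | succ n ih =>
    have hpos : (0 : ℝ) < x * #(avoidingWords F (n + 1)) :=
      (Nat.cast_pos.2 ih.card_pos).trans_le (hgrowth n)
    exact card_pos.1 (Nat.cast_pos.1 (pos_of_mul_pos_right hpos hx.le))

end Avoiding

section Compactness

variable {α : Type*}

theorem ofFn_prefix_ofFn_of_le (s : ℕ → α) {n N : ℕ} (h : n ≤ N) :
    (List.ofFn fun k : Fin n => s k) <+: List.ofFn fun k : Fin N => s k := by
  obtain ⟨d, rfl⟩ := Nat.exists_eq_add_of_le h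
  rw [List.ofFn_add]
  exact List.prefix_append _ _

theorem ofFn_add_suffix_ofFn (s : ℕ → α) (i k : ℕ) :
    (List.ofFn fun t : Fin k => s (i + t)) <:+ List.ofFn fun t : Fin (i + k) => s t := by
  rw [List.ofFn_add]
  exact List.suffix_append _ _

theorem exists_seq_forall_ofFn_mem [Finite α] (L : Set (List α))
    (hpre : ∀ l ∈ L, ∀ p, p <+: l → p ∈ L) (hlong : ∀ n, ∃ l ∈ L, l.length = n) :
    ∃ s : ℕ → α, ∀ n, (List.ofFn fun k : Fin n => s k) ∈ L := by
  obtain ⟨l₁, -, hl₁⟩ := hlong 1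
  have : Nonempty α := ⟨l₁[0]'(by omega)⟩
  let _ : TopologicalSpace α := ⊥
  have : DiscreteTopology α := ⟨rfl⟩
  let t n : Set (ℕ → α) := (fun s (k : Fin n) => s k) ⁻¹' {f | List.ofFn f ∈ L}
  have ht_closed n : IsClosed (t n) :=
    (isClosed_discrete _).preimage (continuous_pi fun k => continuous_apply _)
  have ht_anti n : t (n + 1) ⊆ t n := fun s hs =>
    hpre _ hs _ (ofFn_prefix_ofFn_of_le s n.le_succ)
  have ht_nonempty n : (t n).Nonempty := by
    obtain ⟨l, hl, rfl⟩ := hlong n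
    refine ⟨fun k => l.getD k (Classical.arbitrary α), ?_⟩
    simpa only [t, Set.mem_preimage, Set.mem_ofPred_eq, Fin.is_lt, List.getD_eq_getElem,
      List.ofFn_getElem] using hl
  obtain ⟨s, hs⟩ := IsCompact.nonempty_iInter_of_sequence_nonempty_isCompact_isClosed t ht_anti
    ht_nonempty (ht_closed 0).isCompact ht_closed
  exact ⟨s, Set.mem_iInter.1 hs⟩

end Compactness

theorem exists_infinite_sequence_avoiding_general (m : ℕ)
    (F : Finset (List (Fin m))) (hF : ∀ w ∈ F, 2 ≤ w.length)
    (hx : ∃ x : ℝ, 0 < x ∧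
      ∑' j : ℕ, ((F.filter (fun w => w.length = j)).card : ℝ) * x ^ j < m * x - 1) :
    ∃ s : ℕ → Fin m, ∀ i : ℕ, ∀ w ∈ F,
      w ≠ List.ofFn (fun t : Fin w.length => s (i + t)) := by
  obtain ⟨x, hx0, hsum⟩ := hx
  rw [tsum_card_filter_mul_eq_sum F List.length (x ^ ·)] at hsum
  have hnil : [] ∉ F := fun h => by simpa using hF [] h
  obtain ⟨s, hs⟩ := exists_seq_forall_ofFn_mem {w | Avoids F w}
    (fun _ hw _ hp => Avoids.infix hw hp.isInfix) fun n => by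
      obtain ⟨w, hw⟩ := avoidingWords_nonempty hnil hx0 (by simpa using hsum.le) n
      exact ⟨w, (mem_avoidingWords.1 hw).2, (mem_avoidingWords.1 hw).1⟩
  refine ⟨s, fun i w hw heq => hs (i + w.length) w hw ?_⟩
  have hsuffix := ofFn_add_suffix_ofFn s i w.length
  rw [← heq] at hsuffix
  exact hsuffix.isInfix

/-- Infinite version of Miller's criterion: if `F` is a finite set of forbidden
strings over `Fin m` (each of length ≥ 2) with `a_j` forbidden strings of length `j`,
and there is a real `x > 0` with `∑_{j≥2} a_j·x^j < m·x − 1`, then there exists an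
infinite sequence over `Fin m` containing no forbidden string as a contiguous block. -/
theorem exists_infinite_sequence_avoiding (m : ℕ) (hm : 1 ≤ m)
    (F : Finset (List (Fin m))) (hF : ∀ w ∈ F, 2 ≤ w.length)
    (hx : ∃ x : ℝ, 0 < x ∧
      ∑' j : ℕ, ((F.filter (fun w => w.length = j)).card : ℝ) * x ^ j < m * x - 1) :
    ∃ s : ℕ → Fin m, ∀ i : ℕ, ∀ w ∈ F,
      w ≠ List.ofFn (fun t : Fin w.length => s (i + t)) :=
  exists_infinite_sequence_avoiding_general m F hF hx
end

section
/- Let m > 0 be a real number and let a : ℕ → ℝ satisfy a_j ≥ 0 for all j ≥ 2. Let A be the formal power series 1 − m·X + ∑_{j≥2} a_j·X^j over ℝ; A has constant coefficient 1 and hence is invertible in ℝ⟦X⟧. Then every coefficient of the inverse power series A⁻¹ is strictly positive if and only if there exists a real number x > 0 such that the family (a_j·x^j)_{j≥2} is summable and 1 − m·x + ∑'_{j≥2} a_j·x^j = 0. -/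
/-!
Write `A = 1 - m X + X α(X)` with `α ≥ 0` and `b n` for the coefficients of `A⁻¹`, so that
`b (n + 1) + ∑_{i + j = n} α i b j = m b n`; put `A(x) = 1 - m x + ∑ α i x^(i+1)`.

If `A(x) = 0` with `x > 0`, then `m x = 1 + ∑ α i x^(i+1)` makes `b n xⁿ` nondecreasing by
induction, so every `b n` is positive.

Conversely, let all `b n` be positive and let `R` be the supremum of the `x > 0` at which
`∑ b n xⁿ` converges. At such an `x`, `A(x) > 0`, for otherwise `b n xⁿ` would be nondecreasing.
Summing the recurrence over `n ≥ M` bounds the tails `T M` of `∑ b n xⁿ` by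
`T (M + 1) ≤ (1 - A(x)) T M`, so `b n xⁿ = O((1 - A(x))ⁿ)` and the series converges below
`x / (1 - A(x))`, which is therefore at most `R`. Letting `x → R` in `x / R ≤ 1 - A(x)` and in
`A(x) > 0` gives `A(R) = 0`.
-/

open Finset PowerSeries

/-- `c` is the coefficient sequence of `c 0 / (1 - μ X + X α(X))`. -/
def IsConvRecurrence {R : Type*} [Semiring R] (μ : R) (α c : ℕ → R) : Prop :=
  ∀ n, c (n + 1) + ∑ p ∈ antidiagonal n, α p.1 * c p.2 = μ * c n

theorem isConvRecurrence_coeff_of_mul_eq_one {R : Type*} [CommRing R] {μ : R} {α : ℕ → R}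
    {B : R⟦X⟧} (h : (1 - C μ * X + X * PowerSeries.mk α) * B = 1) :
    IsConvRecurrence μ α fun n => coeff n B := by
  intro n
  have hB : B - C μ * (X * B) + X * (PowerSeries.mk α * B) = 1 := by rw [← h]; ring
  have := congrArg (coeff (n + 1)) hB
  simp only [map_add, map_sub, coeff_C_mul, coeff_succ_X_mul, coeff_one, n.succ_ne_zero,
    if_false] at this
  simp only [coeff_mul, coeff_mk] at this
  linear_combination this

namespace IsConvRecurrence

theorem scale {R : Type*} [CommSemiring R] {μ : R} {α c : ℕ → R} (h : IsConvRecurrence μ α c)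
    (x : R) : IsConvRecurrence (μ * x) (fun i => α i * x ^ (i + 1)) (fun n => c n * x ^ n) := by
  intro n
  calc c (n + 1) * x ^ (n + 1) + ∑ p ∈ antidiagonal n, α p.1 * x ^ (p.1 + 1) * (c p.2 * x ^ p.2)
      = (c (n + 1) + ∑ p ∈ antidiagonal n, α p.1 * c p.2) * x ^ (n + 1) := by
        rw [add_mul, sum_mul]
        congr 1
        refine sum_congr rfl fun p hp => ?_
        rw [← mem_antidiagonal.1 hp]
        ring
    _ = μ * x * (c n * x ^ n) := by rw [h n]; ring

variable {μ : ℝ} {α c : ℕ → ℝ}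

theorem succ_le (h : IsConvRecurrence μ α c) (hα : ∀ i, 0 ≤ α i) (hc : ∀ n, 0 ≤ c n) (n : ℕ) :
    c (n + 1) ≤ μ * c n := by
  rw [← h n]
  exact le_add_of_nonneg_right (sum_nonneg fun p _ => mul_nonneg (hα _) (hc _))

theorem le_pow_mul (h : IsConvRecurrence μ α c) (hα : ∀ i, 0 ≤ α i) (hc : ∀ n, 0 ≤ c n)
    (hμ : 0 ≤ μ) (n : ℕ) : c n ≤ μ ^ n * c 0 := by
  induction n with
  | zero => simp
  | succ n ih =>
    calc c (n + 1) ≤ μ * c n := h.succ_le hα hc n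
      _ ≤ μ * (μ ^ n * c 0) := by gcongr
      _ = μ ^ (n + 1) * c 0 := by ring

theorem mul_le (h : IsConvRecurrence μ α c) (hα : ∀ i, 0 ≤ α i) (hc : ∀ n, 0 ≤ c n) (n : ℕ) :
    α n * c 0 ≤ μ * c n := by
  rw [← h n]
  have : α n * c 0 ≤ ∑ p ∈ antidiagonal n, α p.1 * c p.2 :=
    single_le_sum (f := fun p => α p.1 * c p.2) (a := (n, 0)) (fun p _ => mul_nonneg (hα _) (hc _))
      (mem_antidiagonal.2 (add_zero n))
  linarith [hc (n + 1)]

theorem monotone (h : IsConvRecurrence μ α c) (hα : ∀ i, 0 ≤ α i) (hsα : Summable α)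
    (hμ : 1 + ∑' i, α i ≤ μ) (hc0 : 0 ≤ c 0) : Monotone c := by
  have key : ∀ n, ∀ j ≤ n, c j ≤ c n := by
    intro n
    induction n with
    | zero => intro j hj; rw [Nat.le_zero.1 hj]
    | succ n ih =>
      have hcn : 0 ≤ c n := hc0.trans (ih 0 n.zero_le)
      have hconv : ∑ p ∈ antidiagonal n, α p.1 * c p.2 ≤ (∑' i, α i) * c n :=
        calc ∑ p ∈ antidiagonal n, α p.1 * c p.2
            ≤ ∑ p ∈ antidiagonal n, α p.1 * c n :=
              sum_le_sum fun p hp => mul_le_mul_of_nonneg_left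
                (ih _ (HasAntidiagonal.antidiagonal.snd_le hp)) (hα _)
          _ = (∑ i ∈ range (n + 1), α i) * c n := by
              rw [← sum_mul, Nat.sum_antidiagonal_eq_sum_range_succ (fun i _ => α i)]
          _ ≤ (∑' i, α i) * c n := by
              gcongr
              exact hsα.sum_le_tsum _ fun i _ => hα i
      have hstep : c n ≤ c (n + 1) := by nlinarith [h n]
      intro j hj
      rcases hj.lt_or_eq with hj | rfl
      · exact (ih j (Nat.lt_succ_iff.1 hj)).trans hstep
      · exact le_rfl
  exact fun j n hjn => key n j hjn

theorem tsum_shift_add_mul_le (h : IsConvRecurrence μ α c) (hα : ∀ i, 0 ≤ α i)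
    (hc : ∀ n, 0 ≤ c n) (hsα : Summable α) (hsc : Summable c) (M : ℕ) :
    ∑' k, c (k + (M + 1)) + (∑' i, α i) * ∑' k, c (k + M) ≤ μ * ∑' k, c (k + M) := by
  have hscM : Summable fun k => c (k + M) := (summable_nat_add_iff M).2 hsc
  have hscM' : Summable fun k => c (k + (M + 1)) := (summable_nat_add_iff (M + 1)).2 hsc
  have hprod : Summable fun p : ℕ × ℕ => α p.1 * c (p.2 + M) :=
    hsα.mul_of_nonneg hscM (fun i => hα i) fun k => hc _
  -- the terms `α i * c j` with `j ≥ M` of the convolution at `n = k + M` form the Cauchy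
  -- product of `α` with the tail `c (· + M)`
  have hconv : ∀ k, ∑ p ∈ antidiagonal k, α p.1 * c (p.2 + M)
      ≤ μ * c (k + M) - c (k + (M + 1)) := by
    intro k
    rw [show k + (M + 1) = k + M + 1 from rfl, ← h (k + M), add_sub_cancel_left]
    calc ∑ p ∈ antidiagonal k, α p.1 * c (p.2 + M)
        = ∑ p ∈ antidiagonal (k + M) with p.1 ≤ k, α p.1 * c p.2 := by
          rw [Nat.antidiagonal_filter_fst_le_of_le (k.le_add_right M), sum_map]
          simp
      _ ≤ ∑ p ∈ antidiagonal (k + M), α p.1 * c p.2 :=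
          sum_le_sum_of_subset_of_nonneg (filter_subset _ _) fun p _ _ => mul_nonneg (hα _) (hc _)
  have hsconv : Summable fun k => ∑ p ∈ antidiagonal k, α p.1 * c (p.2 + M) :=
    summable_sum_mul_antidiagonal_of_summable_mul (f := α) (g := fun k => c (k + M)) hprod
  calc ∑' k, c (k + (M + 1)) + (∑' i, α i) * ∑' k, c (k + M)
      = ∑' k, c (k + (M + 1)) + ∑' k, ∑ p ∈ antidiagonal k, α p.1 * c (p.2 + M) := by
        rw [hsα.tsum_mul_tsum_eq_tsum_sum_antidiagonal hscM hprod]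
    _ ≤ ∑' k, c (k + (M + 1)) + ∑' k, (μ * c (k + M) - c (k + (M + 1))) :=
        add_le_add le_rfl (hsconv.tsum_le_tsum hconv ((hscM.mul_left μ).sub hscM'))
    _ = μ * ∑' k, c (k + M) := by
        rw [(hscM.mul_left μ).tsum_sub hscM', tsum_mul_left]
        ring

theorem le_pow_mul_tsum (h : IsConvRecurrence μ α c) (hα : ∀ i, 0 ≤ α i) (hc : ∀ n, 0 ≤ c n)
    (hsα : Summable α) (hsc : Summable c) (hμ : ∑' i, α i ≤ μ) (n : ℕ) :
    c n ≤ (μ - ∑' i, α i) ^ n * ∑' k, c k := by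
  have htail : ∀ M, ∑' k, c (k + M) ≤ (μ - ∑' i, α i) ^ M * ∑' k, c k := by
    intro M
    induction M with
    | zero => simp
    | succ M ih =>
      calc ∑' k, c (k + (M + 1)) ≤ (μ - ∑' i, α i) * ∑' k, c (k + M) := by
            rw [sub_mul]; linarith [h.tsum_shift_add_mul_le hα hc hsα hsc M]
        _ ≤ (μ - ∑' i, α i) * ((μ - ∑' i, α i) ^ M * ∑' k, c k) :=
            mul_le_mul_of_nonneg_left ih (sub_nonneg.2 hμ)
        _ = (μ - ∑' i, α i) ^ (M + 1) * ∑' k, c k := by ring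
  calc c n = c (0 + n) := by rw [zero_add]
    _ ≤ ∑' k, c (k + n) := ((summable_nat_add_iff n).2 hsc).le_tsum 0 fun k _ => hc _
    _ ≤ _ := htail n

end IsConvRecurrence

theorem le_of_forall_mem_Ioo_le {f g : ℝ → ℝ} {a b : ℝ} (hab : a < b) (hf : Continuous f)
    (hg : Continuous g) (h : ∀ x ∈ Set.Ioo a b, f x ≤ g x) : f b ≤ g b :=
  hf.continuousWithinAt.closure_le (by rw [closure_Ioo hab.ne]; exact Set.right_mem_Icc.2 hab.le)
    hg.continuousWithinAt h

section PositiveCoefficients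

variable {m : ℝ} {α b : ℕ → ℝ}

def posConvSet (b : ℕ → ℝ) : Set ℝ := {x | 0 < x ∧ Summable fun n => b n * x ^ n}

theorem mem_posConvSet_of_le (hb : ∀ n, 0 ≤ b n) {x y : ℝ} (hy : y ∈ posConvSet b) (hx : 0 < x)
    (hxy : x ≤ y) : x ∈ posConvSet b :=
  ⟨hx, hy.2.of_nonneg_of_le (fun n => mul_nonneg (hb n) (pow_nonneg hx.le n))
    fun n => mul_le_mul_of_nonneg_left (pow_le_pow_left₀ hx.le hxy n) (hb n)⟩

theorem inv_two_mul_mem_posConvSet (hrec : IsConvRecurrence m α b) (hα : ∀ i, 0 ≤ α i)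
    (hb : ∀ n, 0 < b n) (hb0 : b 0 = 1) : (2 * m)⁻¹ ∈ posConvSet b := by
  have hb' : ∀ n, 0 ≤ b n := fun n => (hb n).le
  have hm : 0 < m := (hb 1).trans_le (by simpa [hb0] using hrec.succ_le hα hb' 0)
  refine ⟨by positivity, summable_geometric_two.of_nonneg_of_le
    (fun n => mul_nonneg (hb' n) (by positivity)) fun n => ?_⟩
  calc b n * (2 * m)⁻¹ ^ n ≤ m ^ n * (2 * m)⁻¹ ^ n := by
        gcongr
        simpa [hb0] using hrec.le_pow_mul hα hb' hm.le n
    _ = (1 / 2) ^ n := by rw [← mul_pow]; field_simp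

theorem summable_of_mem_posConvSet (hrec : IsConvRecurrence m α b) (hα : ∀ i, 0 ≤ α i)
    (hb : ∀ n, 0 ≤ b n) (hb0 : b 0 = 1) {x : ℝ} (hx : x ∈ posConvSet b) :
    Summable fun i => α i * x ^ (i + 1) := by
  refine (hx.2.mul_left (m * x)).of_nonneg_of_le
    (fun i => mul_nonneg (hα i) (pow_nonneg hx.1.le _)) fun i => ?_
  simpa [hb0] using (hrec.scale x).mul_le (fun i => mul_nonneg (hα i) (pow_nonneg hx.1.le _))
    (fun n => mul_nonneg (hb n) (pow_nonneg hx.1.le n)) i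

theorem mul_lt_one_add_tsum_of_mem_posConvSet (hrec : IsConvRecurrence m α b)
    (hα : ∀ i, 0 ≤ α i) (hb : ∀ n, 0 ≤ b n) (hb0 : b 0 = 1) {x : ℝ} (hx : x ∈ posConvSet b) :
    m * x < 1 + ∑' i, α i * x ^ (i + 1) := by
  by_contra! hle
  have hmono := (hrec.scale x).monotone (fun i => mul_nonneg (hα i) (pow_nonneg hx.1.le _))
    (summable_of_mem_posConvSet hrec hα hb hb0 hx) hle (by simp [hb0])
  obtain ⟨n, hn⟩ := (hx.2.tendsto_atTop_zero.eventually (gt_mem_nhds one_pos)).exists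
  have := hmono (Nat.zero_le n)
  simp only [hb0, pow_zero, mul_one] at this
  linarith

theorem tsum_lt_mul_of_mem_posConvSet (hrec : IsConvRecurrence m α b) (hα : ∀ i, 0 ≤ α i)
    (hb : ∀ n, 0 < b n) (hb0 : b 0 = 1) {x : ℝ} (hx : x ∈ posConvSet b) :
    ∑' i, α i * x ^ (i + 1) < m * x := by
  have hc : ∀ n, 0 < b n * x ^ n := fun n => mul_pos (hb n) (pow_pos hx.1 n)
  have hstep := (hrec.scale x).tsum_shift_add_mul_le
    (fun i => mul_nonneg (hα i) (pow_nonneg hx.1.le _)) (fun n => (hc n).le)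
    (summable_of_mem_posConvSet hrec hα (fun n => (hb n).le) hb0 hx) hx.2 0
  have hT1 : 0 < ∑' k, b (k + 1) * x ^ (k + 1) :=
    ((summable_nat_add_iff 1).2 hx.2).tsum_pos (fun k => (hc _).le) 0 (hc _)
  have hT0 : 0 < ∑' k, b k * x ^ k := hx.2.tsum_pos (fun k => (hc _).le) 0 (hc _)
  simp only [add_zero, zero_add] at hstep
  nlinarith

theorem mem_posConvSet_of_mul_lt (hrec : IsConvRecurrence m α b) (hα : ∀ i, 0 ≤ α i)
    (hb : ∀ n, 0 < b n) (hb0 : b 0 = 1) {x y : ℝ} (hx : x ∈ posConvSet b) (hy : 0 < y)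
    (hxy : (m * x - ∑' i, α i * x ^ (i + 1)) * y < x) : y ∈ posConvSet b := by
  have hq := sub_pos.2 (tsum_lt_mul_of_mem_posConvSet hrec hα hb hb0 hx)
  have hbound := (hrec.scale x).le_pow_mul_tsum
    (fun i => mul_nonneg (hα i) (pow_nonneg hx.1.le _))
    (fun n => mul_nonneg (hb n).le (pow_nonneg hx.1.le n))
    (summable_of_mem_posConvSet hrec hα (fun n => (hb n).le) hb0 hx) hx.2 (sub_pos.1 hq).le
  have hgeom := (summable_geometric_of_lt_one
    (div_nonneg (mul_nonneg hq.le hy.le) hx.1.le) ((div_lt_one hx.1).2 hxy)).mul_left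
    (∑' k, b k * x ^ k)
  refine ⟨hy, hgeom.of_nonneg_of_le (fun n => mul_nonneg (hb n).le (pow_nonneg hy.le n))
    fun n => ?_⟩
  calc b n * y ^ n = b n * x ^ n * (y / x) ^ n := by
        rw [mul_assoc, ← mul_pow, mul_div_cancel₀ y hx.1.ne']
    _ ≤ (m * x - ∑' i, α i * x ^ (i + 1)) ^ n * (∑' k, b k * x ^ k) * (y / x) ^ n :=
        mul_le_mul_of_nonneg_right (hbound n) (pow_nonneg (div_nonneg hy.le hx.1.le) n)
    _ = (∑' k, b k * x ^ k) * ((m * x - ∑' i, α i * x ^ (i + 1)) * y / x) ^ n := by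
        rw [mul_div_assoc, mul_pow]; ring

theorem bddAbove_posConvSet (hα0 : α 0 = 0) (hrec : IsConvRecurrence m α b)
    (hα : ∀ i, 0 ≤ α i) (hb : ∀ n, 0 < b n) (hb0 : b 0 = 1) : BddAbove (posConvSet b) := by
  have hb' : ∀ n, 0 ≤ b n := fun n => (hb n).le
  by_cases hzero : ∀ i, α i = 0
  · refine ⟨1 / m, fun x hx => ?_⟩
    have h1 := mul_lt_one_add_tsum_of_mem_posConvSet hrec hα hb' hb0 hx
    have h2 := tsum_lt_mul_of_mem_posConvSet hrec hα hb hb0 hx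
    simp only [hzero, zero_mul, tsum_zero, add_zero] at h1 h2
    have hm : 0 < m := pos_of_mul_pos_left h2 hx.1.le
    rw [le_div_iff₀ hm]
    linarith
  · obtain ⟨i, hi⟩ := not_forall.1 hzero
    have hi0 : i ≠ 0 := by rintro rfl; exact hi hα0
    have hαi : 0 < α i := (hα i).lt_of_ne' hi
    refine ⟨max 1 (m / α i), fun x hx => ?_⟩
    rcases le_or_gt x 1 with h | h
    · exact le_max_of_le_left h
    refine le_max_of_le_right ((le_div_iff₀ hαi).2 ?_)
    have hG := tsum_lt_mul_of_mem_posConvSet hrec hα hb hb0 hx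
    have hterm : α i * x ^ (i + 1) ≤ ∑' j, α j * x ^ (j + 1) :=
      (summable_of_mem_posConvSet hrec hα hb' hb0 hx).le_tsum i
        fun j _ => mul_nonneg (hα j) (pow_nonneg hx.1.le _)
    have hpow : x ^ 2 ≤ x ^ (i + 1) := pow_le_pow_right₀ h.le (by omega)
    nlinarith [mul_le_mul_of_nonneg_left hpow hαi.le]

theorem tsum_add_div_sSup_le_of_mem_posConvSet (hrec : IsConvRecurrence m α b)
    (hα : ∀ i, 0 ≤ α i) (hb : ∀ n, 0 < b n) (hb0 : b 0 = 1) (hbdd : BddAbove (posConvSet b))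
    {x : ℝ} (hx : x ∈ posConvSet b) :
    ∑' i, α i * x ^ (i + 1) + x / sSup (posConvSet b) ≤ m * x := by
  have hq := sub_pos.2 (tsum_lt_mul_of_mem_posConvSet hrec hα hb hb0 hx)
  have hR : 0 < sSup (posConvSet b) := hx.1.trans_le (le_csSup hbdd hx)
  suffices x / sSup (posConvSet b) ≤ m * x - ∑' i, α i * x ^ (i + 1) by linarith
  rw [div_le_iff₀' hR]
  by_contra! h
  obtain ⟨y, hRy, hyx⟩ := exists_between ((lt_div_iff₀ hq).2 h)
  have hyS := mem_posConvSet_of_mul_lt hrec hα hb hb0 hx (hR.trans hRy)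
    (by rw [lt_div_iff₀ hq] at hyx; linarith)
  linarith [le_csSup hbdd hyS]

theorem exists_root_of_pos (hα0 : α 0 = 0) (hrec : IsConvRecurrence m α b) (hα : ∀ i, 0 ≤ α i)
    (hb : ∀ n, 0 < b n) (hb0 : b 0 = 1) :
    ∃ x, 0 < x ∧ Summable (fun i => α i * x ^ (i + 1)) ∧
      1 - m * x + ∑' i, α i * x ^ (i + 1) = 0 := by
  have hb' : ∀ n, 0 ≤ b n := fun n => (hb n).le
  have hα' : ∀ x, 0 ≤ x → ∀ i, 0 ≤ α i * x ^ (i + 1) := fun x hx i =>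
    mul_nonneg (hα i) (pow_nonneg hx _)
  have hbdd := bddAbove_posConvSet hα0 hrec hα hb hb0
  have hne := inv_two_mul_mem_posConvSet hrec hα hb hb0
  set R := sSup (posConvSet b)
  have hR : 0 < R := hne.1.trans_le (le_csSup hbdd hne)
  have hmem : ∀ x ∈ Set.Ioo 0 R, x ∈ posConvSet b := fun x hx => by
    obtain ⟨y, hy, hxy⟩ := exists_lt_of_lt_csSup ⟨_, hne⟩ hx.2
    exact mem_posConvSet_of_le hb' hy hx.1 hxy.le
  have hsum : ∀ x ∈ Set.Ioo 0 R, Summable fun i => α i * x ^ (i + 1) := fun x hx =>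
    summable_of_mem_posConvSet hrec hα hb' hb0 (hmem x hx)
  have hpartial : ∀ N, ∑ i ∈ range N, α i * R ^ (i + 1) ≤ m * R - 1 := fun N => by
    have := le_of_forall_mem_Ioo_le hR (f := fun x => ∑ i ∈ range N, α i * x ^ (i + 1) + x / R)
      (g := fun x => m * x) (by fun_prop) (by fun_prop) fun x hx =>
        (add_le_add ((hsum x hx).sum_le_tsum _ fun i _ => hα' x hx.1.le i) le_rfl).trans
          (tsum_add_div_sSup_le_of_mem_posConvSet hrec hα hb hb0 hbdd (hmem x hx))
    rw [div_self hR.ne'] at this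
    linarith
  have hsR := summable_of_sum_range_le (hα' R hR.le) hpartial
  have hGR := Real.tsum_le_of_sum_range_le (hα' R hR.le) hpartial
  have hGR' : m * R ≤ 1 + ∑' i, α i * R ^ (i + 1) :=
    le_of_forall_mem_Ioo_le hR (f := fun x => m * x) (by fun_prop) continuous_const fun x hx =>
      (mul_lt_one_add_tsum_of_mem_posConvSet hrec hα hb' hb0 (hmem x hx)).le.trans
        (add_le_add le_rfl ((hsum x hx).tsum_le_tsum (fun i => mul_le_mul_of_nonneg_left
          (pow_le_pow_left₀ hx.1.le hx.2.le _) (hα i)) hsR))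
  exact ⟨R, hR, hsR, by linarith⟩

theorem pos_of_root (hrec : IsConvRecurrence m α b) (hα : ∀ i, 0 ≤ α i) (hb0 : b 0 = 1) {x : ℝ}
    (hx : 0 < x) (hs : Summable fun i => α i * x ^ (i + 1))
    (hroot : 1 - m * x + ∑' i, α i * x ^ (i + 1) = 0) (n : ℕ) : 0 < b n := by
  have := (hrec.scale x).monotone (fun i => mul_nonneg (hα i) (pow_nonneg hx.le _)) hs
    (by linarith) (by simp [hb0]) (Nat.zero_le n)
  simp only [hb0, pow_zero, mul_one] at this
  exact pos_of_mul_pos_left (one_pos.trans_le this) (pow_nonneg hx.le n)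

end PositiveCoefficients

def tailCoeff (a : ℕ → ℝ) (i : ℕ) : ℝ := if i = 0 then 0 else a (i + 1)

theorem mk_eq_one_sub_C_mul_X_add_X_mul_mk_tailCoeff (m : ℝ) (a : ℕ → ℝ) :
    PowerSeries.mk (fun j => if j = 0 then 1 else if j = 1 then -m else a j) =
      1 - C m * X + X * PowerSeries.mk (tailCoeff a) := by
  ext (_ | _ | n) <;> simp [tailCoeff, coeff_one, coeff_succ_X_mul]

theorem summable_tailCoeff_mul_pow_iff {a : ℕ → ℝ} {x : ℝ} :
    Summable (fun i => tailCoeff a i * x ^ (i + 1)) ↔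
      Summable fun j => a (j + 2) * x ^ (j + 2) := by
  rw [← summable_nat_add_iff 1]
  simp [tailCoeff]

theorem tsum_tailCoeff_mul_pow {a : ℕ → ℝ} {x : ℝ}
    (h : Summable fun j => a (j + 2) * x ^ (j + 2)) :
    ∑' i, tailCoeff a i * x ^ (i + 1) = ∑' j, a (j + 2) * x ^ (j + 2) := by
  rw [tsum_eq_zero_add' (by simpa [tailCoeff] using h)]
  simp [tailCoeff]

theorem inv_coeff_pos_iff_exists_pos_root_general (m : ℝ)
    (a : ℕ → ℝ) (ha : ∀ j, 2 ≤ j → 0 ≤ a j)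
    (A : PowerSeries ℝ)
    (hA : A = PowerSeries.mk (fun j => if j = 0 then 1 else if j = 1 then -m else a j)) :
    (∀ n : ℕ, 0 < PowerSeries.coeff n A⁻¹) ↔
      ∃ x : ℝ, 0 < x ∧ Summable (fun j : ℕ => a (j + 2) * x ^ (j + 2)) ∧
        1 - m * x + ∑' j : ℕ, a (j + 2) * x ^ (j + 2) = 0 := by
  rw [mk_eq_one_sub_C_mul_X_add_X_mul_mk_tailCoeff] at hA
  have hA0 : constantCoeff A = 1 := by simp [hA]
  have hrec : IsConvRecurrence m (tailCoeff a) fun n => coeff n A⁻¹ :=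
    isConvRecurrence_coeff_of_mul_eq_one
      (by rw [← hA, PowerSeries.mul_inv_cancel A (by simp [hA0])])
  have hb0 : coeff 0 A⁻¹ = 1 := by simp [hA0]
  have hα : ∀ i, 0 ≤ tailCoeff a i := fun i => by
    unfold tailCoeff
    split_ifs with hi
    exacts [le_rfl, ha _ (by omega)]
  constructor
  · intro hpos
    obtain ⟨x, hx, hs, hroot⟩ := exists_root_of_pos (by simp [tailCoeff]) hrec hα hpos hb0
    rw [summable_tailCoeff_mul_pow_iff] at hs
    exact ⟨x, hx, hs, by rwa [← tsum_tailCoeff_mul_pow hs]⟩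
  · rintro ⟨x, hx, hs, hroot⟩
    exact pos_of_root hrec hα hb0 hx (summable_tailCoeff_mul_pow_iff.2 hs)
      (by rwa [tsum_tailCoeff_mul_pow hs])

/-- Piontkovsky's criterion: for `m > 0` and `a_j ≥ 0` (`j ≥ 2`), the inverse of
`A = 1 − m·X + ∑_{j≥2} a_j·X^j ∈ ℝ⟦X⟧` has all coefficients strictly positive iff
the series defining `A` has a root on the positive real line. -/
theorem inv_coeff_pos_iff_exists_pos_root (m : ℝ) (hm : 0 < m)
    (a : ℕ → ℝ) (ha : ∀ j, 2 ≤ j → 0 ≤ a j)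
    (A : PowerSeries ℝ)
    (hA : A = PowerSeries.mk (fun j => if j = 0 then 1 else if j = 1 then -m else a j)) :
    (∀ n : ℕ, 0 < PowerSeries.coeff n A⁻¹) ↔
      ∃ x : ℝ, 0 < x ∧ Summable (fun j : ℕ => a (j + 2) * x ^ (j + 2)) ∧
        1 - m * x + ∑' j : ℕ, a (j + 2) * x ^ (j + 2) = 0 :=
  inv_coeff_pos_iff_exists_pos_root_general m a ha A hA
end

section
/- Let a : ℕ → ℝ satisfy a_0 > 0 and a_j ≥ 0 for all j ≥ 2 (a_1 may be an arbitrary real number). Suppose there exists a real number α > 0 such that the family (a_j·α^j)_{j≥0} is summable and ∑'_{j≥0} a_j·α^j = 0. Then the formal power series A = ∑_{j≥0} a_j·X^j over ℝ is invertible in ℝ⟦X⟧ and every coefficient of A⁻¹ is strictly positive. -/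
/-!
Substituting `X ↦ αX` reduces the claim to `α = 1`, i.e. to `∑ a_j = 0`. Then `A = (1 - X) Q`
where `Q_n = a_0 + ⋯ + a_n`, so `Q_0 = a_0 > 0` and `Q_n = -∑_{j>n} a_j ≤ 0` for `n ≥ 1`. The
recursion for the coefficients of `Q⁻¹` shows that they are all nonnegative, and the coefficients
of `A⁻¹ = Q⁻¹ (1 - X)⁻¹` are their partial sums, each at least `1 / a_0`.
-/

namespace PowerSeries

open Finset

theorem mk_eq_one_sub_X_mul_mk_partialSums {R : Type*} [CommRing R] (a : ℕ → R) :
    mk a = (1 - X) * mk fun n => ∑ j ∈ range (n + 1), a j := by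
  ext (_ | n)
  · simp
  · simp [sub_mul, coeff_succ_X_mul, sum_range_succ]

theorem inv_one_sub_X {k : Type*} [Field k] : (1 - X : k⟦X⟧)⁻¹ = mk 1 :=
  (inv_eq_iff_mul_eq_one (by simp)).2 (mk_one_mul_one_sub_eq_one k)

theorem constantCoeff_rescale {R : Type*} [CommSemiring R] (c : R) (φ : R⟦X⟧) :
    constantCoeff (rescale c φ) = constantCoeff φ := by
  rw [← coeff_zero_eq_constantCoeff_apply, coeff_rescale, pow_zero, one_mul,
    coeff_zero_eq_constantCoeff_apply]

theorem rescale_inv {k : Type*} [Field k] (c : k) (φ : k⟦X⟧) :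
    rescale c φ⁻¹ = (rescale c φ)⁻¹ := by
  by_cases h : constantCoeff φ = 0
  · rw [inv_eq_zero.2 h, inv_eq_zero.2 (by rwa [constantCoeff_rescale]), map_zero]
  · refine ((inv_eq_iff_mul_eq_one (by rwa [constantCoeff_rescale])).2 ?_).symm
    rw [← map_mul, PowerSeries.inv_mul_cancel _ h, map_one]

section LinearOrderedField

variable {k : Type*} [Field k] [LinearOrder k] [IsStrictOrderedRing k]

theorem coeff_inv_nonneg_of_coeff_nonpos {φ : k⟦X⟧} (h0 : 0 < constantCoeff φ)
    (h : ∀ n, n ≠ 0 → coeff n φ ≤ 0) (n : ℕ) : 0 ≤ coeff n φ⁻¹ := by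
  induction n using Nat.strong_induction_on with
  | _ n ih =>
    rw [coeff_inv]
    split_ifs with hn
    · exact (inv_pos.2 h0).le
    refine mul_nonneg_of_nonpos_of_nonpos (by simpa using h0.le) (sum_nonpos fun x hx => ?_)
    split_ifs with hx2
    · have hx1 : x.1 ≠ 0 := by
        have := mem_antidiagonal.1 hx
        omega
      exact mul_nonpos_of_nonpos_of_nonneg (h _ hx1) (ih _ hx2)
    · rfl

theorem coeff_mul_mk_one_pos {φ : k⟦X⟧} (h0 : 0 < constantCoeff φ) (h : ∀ n, 0 ≤ coeff n φ)
    (n : ℕ) : 0 < coeff n (φ * mk 1) := by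
  rw [coeff_mul]
  refine sum_pos' (fun x _ => by simpa using h x.1) ⟨(0, n), by simp, by simpa using h0⟩

variable [TopologicalSpace k] [OrderClosedTopology k]

theorem coeff_inv_mk_pos_of_hasSum_zero {a : ℕ → k} (h0 : 0 < a 0) (ha : ∀ j, 2 ≤ j → 0 ≤ a j)
    (hsum : HasSum a 0) (n : ℕ) : 0 < coeff n (mk a)⁻¹ := by
  have hpartial : ∀ n, n ≠ 0 → ∑ j ∈ range (n + 1), a j ≤ 0 := fun n hn =>
    sum_le_hasSum _ (fun j hj => ha j (by rw [mem_range] at hj; omega)) hsum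
  rw [mk_eq_one_sub_X_mul_mk_partialSums, PowerSeries.mul_inv_rev, inv_one_sub_X]
  refine coeff_mul_mk_one_pos (by simpa using h0) (coeff_inv_nonneg_of_coeff_nonpos ?_ ?_) n
  · simpa using h0
  · simpa using hpartial

end LinearOrderedField

end PowerSeries

/-- (Piontkovsky)  If `a_0 > 0`, `a_j ≥ 0` for all `j ≥ 2` (`a_1` arbitrary), and the
series `∑ a_j·x^j` converges to `0` at some `α > 0`, then the formal power series
`A = ∑ a_j·X^j ∈ ℝ⟦X⟧` is invertible and all coefficients of `A⁻¹` are strictly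
positive. -/
theorem inv_coeff_pos_of_pos_root (a : ℕ → ℝ) (h0 : 0 < a 0)
    (ha : ∀ j, 2 ≤ j → 0 ≤ a j)
    (hroot : ∃ α : ℝ, 0 < α ∧ Summable (fun j : ℕ => a j * α ^ j) ∧
      ∑' j : ℕ, a j * α ^ j = 0) :
    IsUnit (PowerSeries.mk a) ∧
      ∀ n : ℕ, 0 < PowerSeries.coeff n (PowerSeries.mk a)⁻¹ := by
  obtain ⟨α, hα, hsum, hzero⟩ := hroot
  refine ⟨PowerSeries.isUnit_iff_constantCoeff.2 (by simpa using h0.ne'), fun n => ?_⟩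
  have hscaled : HasSum (fun j => α ^ j * a j) 0 := by
    simpa only [mul_comm] using hzero ▸ hsum.hasSum
  have hpos := PowerSeries.coeff_inv_mk_pos_of_hasSum_zero (by simpa using h0)
    (fun j hj => mul_nonneg (pow_nonneg hα.le j) (ha j hj)) hscaled n
  rw [← PowerSeries.rescale_mk, ← PowerSeries.rescale_inv, PowerSeries.coeff_rescale] at hpos
  exact pos_of_mul_pos_right hpos (pow_nonneg hα.le n)
end

section
/- Let m > 0 be a real number and let a : ℕ → ℝ satisfy a_j ≥ 0 for all j ≥ 2. Let A be the formal power series 1 − m·X + ∑_{j≥2} a_j·X^j over ℝ. If every coefficient of the inverse power series A⁻¹ is nonnegative, then every coefficient of A⁻¹ is strictly positive. -/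
/-!
Write `b n` for the coefficients of `B = A⁻¹`. Comparing coefficients in `A * B = 1` gives
`a₀ b (n+2) + a₁ b (n+1) + ∑_{i+j=n} a (i+2) b j = 0` with every term of the last sum
nonnegative, so a zero `b (n+1) = 0` forces `b (n+2) = 0`. Hence if some coefficient vanishes,
`B` is a polynomial of some degree `d`. The coefficient of `X^(d+k+2)` in `A * B` then reduces to
the nonnegative sum containing `a (k+2) b d`, so `a (k+2) = 0` for all `k`; thus `A = a₀ + a₁ X`,
and the coefficient of `X^(d+1)` in `A * B` is `a₁ b d ≠ 0`, a contradiction.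
-/

open Finset

namespace PowerSeries

theorem coeff_add_two_mul {S : Type*} [Semiring S] (A B : S⟦X⟧) (n : ℕ) :
    coeff (n + 2) (A * B) = coeff 0 A * coeff (n + 2) B + coeff 1 A * coeff (n + 1) B +
      ∑ p ∈ antidiagonal n, coeff (p.1 + 2) A * coeff p.2 B := by
  rw [coeff_mul, Nat.sum_antidiagonal_succ, Nat.sum_antidiagonal_succ, ← add_assoc]

theorem coeff_succ_mul_of_coeff_add_two_eq_zero {S : Type*} [Semiring S] {A : S⟦X⟧}
    (hA : ∀ k, coeff (k + 2) A = 0) (B : S⟦X⟧) (n : ℕ) :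
    coeff (n + 1) (A * B) = coeff 0 A * coeff (n + 1) B + coeff 1 A * coeff n B := by
  cases n with
  | zero => simp [coeff_mul, Nat.antidiagonal_succ]
  | succ n => simp [coeff_add_two_mul, hA]

section NonnegInverse

variable {R : Type*} [CommRing R] [LinearOrder R] [IsStrictOrderedRing R] {A B : R⟦X⟧}

theorem coeff_zero_pos_of_mul_eq_one (hAB : A * B = 1) (hB : 0 ≤ coeff 0 B) :
    0 < coeff 0 A ∧ 0 < coeff 0 B := by
  have h : coeff 0 A * coeff 0 B = 1 := by
    simpa [coeff_zero_eq_constantCoeff_apply] using congrArg constantCoeff hAB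
  have hpos : 0 < coeff 0 A * coeff 0 B := h ▸ one_pos
  have ha₀ := pos_of_mul_pos_left hpos hB
  exact ⟨ha₀, pos_of_mul_pos_right hpos ha₀.le⟩

theorem coeff_add_two_mul_coeff_nonneg (hA : ∀ j, 2 ≤ j → 0 ≤ coeff j A)
    (hB : ∀ n, 0 ≤ coeff n B) (n : ℕ) :
    ∀ p ∈ antidiagonal n, 0 ≤ coeff (p.1 + 2) A * coeff p.2 B :=
  fun _ _ => mul_nonneg (hA _ (by omega)) (hB _)

variable (hAB : A * B = 1) (hA : ∀ j, 2 ≤ j → 0 ≤ coeff j A) (hB : ∀ n, 0 ≤ coeff n B)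
include hAB hA hB

theorem coeff_add_two_eq_zero_of_coeff_succ_eq_zero {k : ℕ} (hk : coeff (k + 1) B = 0) :
    coeff (k + 2) B = 0 := by
  have hsum := coeff_add_two_mul A B k
  rw [hAB, coeff_one, if_neg (by omega), hk, mul_zero, add_zero] at hsum
  have ha₀ := (coeff_zero_pos_of_mul_eq_one hAB (hB 0)).1
  have hlead : coeff 0 A * coeff (k + 2) B = 0 :=
    (add_eq_zero_iff_of_nonneg (mul_nonneg ha₀.le (hB _))
      (sum_nonneg (coeff_add_two_mul_coeff_nonneg hA hB k))).1 hsum.symm |>.1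
  exact (mul_eq_zero.1 hlead).resolve_left ha₀.ne'

theorem coeff_eq_zero_of_lt_of_coeff_succ_eq_zero {d : ℕ} (hd : coeff (d + 1) B = 0) :
    ∀ n, d < n → coeff n B = 0 := by
  intro n hn
  obtain ⟨k, rfl⟩ := Nat.exists_eq_add_of_lt hn
  induction k with
  | zero => exact hd
  | succ k ih => exact coeff_add_two_eq_zero_of_coeff_succ_eq_zero hAB hA hB (ih (by omega))

theorem coeff_add_two_eq_zero_of_coeff_eq_zero_of_lt {d : ℕ} (hd : 0 < coeff d B)
    (htail : ∀ n, d < n → coeff n B = 0) (k : ℕ) : coeff (k + 2) A = 0 := by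
  have hsum := coeff_add_two_mul A B (k + d)
  rw [hAB, coeff_one, if_neg (by omega), htail _ (by omega), htail _ (by omega),
    mul_zero, mul_zero, zero_add, zero_add] at hsum
  have hterm := (sum_eq_zero_iff_of_nonneg (coeff_add_two_mul_coeff_nonneg hA hB _)).1
    hsum.symm (k, d) (by simp)
  exact (mul_eq_zero.1 hterm).resolve_right hd.ne'

theorem coeff_pos_of_mul_eq_one_of_coeff_nonneg (ha₁ : coeff 1 A ≠ 0) (n : ℕ) :
    0 < coeff n B := by
  by_contra hn
  have hzero : ∃ n, coeff n B = 0 := ⟨n, le_antisymm (not_lt.1 hn) (hB n)⟩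
  classical
  obtain ⟨d, hd⟩ : ∃ d, Nat.find hzero = d + 1 := Nat.exists_eq_succ_of_ne_zero fun h =>
    (coeff_zero_pos_of_mul_eq_one hAB (hB 0)).2.ne' (h ▸ Nat.find_spec hzero)
  have hd_pos : 0 < coeff d B :=
    (hB d).lt_of_ne' (Nat.find_min hzero (by omega : d < Nat.find hzero))
  have htail := coeff_eq_zero_of_lt_of_coeff_succ_eq_zero hAB hA hB (hd ▸ Nat.find_spec hzero)
  have hcoeff := coeff_succ_mul_of_coeff_add_two_eq_zero
    (coeff_add_two_eq_zero_of_coeff_eq_zero_of_lt hAB hA hB hd_pos htail) B d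
  rw [hAB, coeff_one, if_neg (by omega), htail _ d.lt_succ_self, mul_zero, zero_add] at hcoeff
  exact mul_ne_zero ha₁ hd_pos.ne' hcoeff.symm

end NonnegInverse

end PowerSeries

open PowerSeries

/-- For `m > 0` and `a_j ≥ 0` (`j ≥ 2`), if all coefficients of the inverse of
`A = 1 − m·X + ∑_{j≥2} a_j·X^j ∈ ℝ⟦X⟧` are nonnegative, then they are all strictly
positive. -/
theorem inv_coeff_pos_of_inv_coeff_nonneg (m : ℝ) (hm : 0 < m)
    (a : ℕ → ℝ) (ha : ∀ j, 2 ≤ j → 0 ≤ a j)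
    (A : PowerSeries ℝ)
    (hA : A = PowerSeries.mk (fun j => if j = 0 then 1 else if j = 1 then -m else a j))
    (hnonneg : ∀ n : ℕ, 0 ≤ PowerSeries.coeff n A⁻¹) :
    ∀ n : ℕ, 0 < PowerSeries.coeff n A⁻¹ := by
  have hcoeff (j : ℕ) : coeff j A = if j = 0 then 1 else if j = 1 then -m else a j := by
    rw [hA, coeff_mk]
  have hA₀ : constantCoeff A ≠ 0 := by
    simp [← coeff_zero_eq_constantCoeff_apply, hcoeff]
  refine coeff_pos_of_mul_eq_one_of_coeff_nonneg (PowerSeries.mul_inv_cancel A hA₀)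
    (fun j hj => ?_) hnonneg ?_
  · rw [hcoeff, if_neg (by omega), if_neg (by omega)]
    exact ha j hj
  · simp [hcoeff, hm.ne']
end
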